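/- arXiv:0909.3680 — 5 statements merged into one kernel-verified Lean document; each statement's English description precedes it below -/
import Mathlib

section
/- Let d ≥ 1 and let Γ be an additive sub-semigroup of ℕ^{d+1} that is finitely generated as a semigroup and that generates ℤ^{d+1} as a group. Then there exists an element γ ∈ Γ such that every point of ℕ^{d+1} lying in the translated cone γ + Σ(Γ) belongs to Γ; that is, (γ + Σ(Γ)) ∩ ℕ^{d+1} ⊆ Γ. -/
/-- The image of a vector of natural numbers in `ℝ^n`. -/
def natVecR {n : ℕ} (γ : Fin n → ℕ) : Fin n → ℝ := fun i => (γ i : ℝ)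

/-- `Σ(Γ)`: the closed convex cone generated by `Γ ⊆ ℕ^n` in `ℝ^n`, i.e. the topological
closure of the set of all finite nonnegative real linear combinations of elements of `Γ`. -/
def coneOf {n : ℕ} (Γ : Set (Fin n → ℕ)) : Set (Fin n → ℝ) :=
  closure { x | ∃ (k : ℕ) (c : Fin k → ℝ) (g : Fin k → (Fin n → ℕ)),
    (∀ i, 0 ≤ c i) ∧ (∀ i, g i ∈ Γ) ∧ x = ∑ i, c i • natVecR (g i) }

/-!
Let `S` be a finite generating set of `Γ`. The closed cone `Σ(Γ)` is the cone spanned by `S`: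
a cone over finitely many points of `ℕ^{d+1} \ {0}` is closed, since its part below any level
of the coordinate sum is the image of a compact box of coefficients. Rounding the coefficients of
an integer point `z = ∑ cₛ s` of this cone down writes it as `ρ + ∑ ⌊cₛ⌋ s` with `ρ` one of the
finitely many lattice points of the box `[0, ∑_{s ∈ S} s]`. As `Γ` generates `ℤ^{d+1}`, each such
`ρ` is a difference `a - b` of elements of `Γ`; the sum `γ` of all these `b` then satisfies
`γ + ρ ∈ Γ` for every `ρ` in the box, hence `γ + z ∈ Γ`.
-/

open Set PointedCone

section Cone

variable {E : Type*} [AddCommGroup E] [Module ℝ E]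

lemma PointedCone.mem_hull_range_iff {ι : Type*} [Fintype ι] {v : ι → E} {x : E} :
    x ∈ hull ℝ (range v) ↔ ∃ c : ι → ℝ, (∀ i, 0 ≤ c i) ∧ ∑ i, c i • v i = x := by
  rw [Submodule.mem_span_range_iff_exists_fun]
  constructor
  · rintro ⟨c, rfl⟩
    exact ⟨fun i => c i, fun i => (c i).2, by simp only [Nonneg.coe_smul]⟩
  · rintro ⟨c, hc, rfl⟩
    exact ⟨fun i => ⟨c i, hc i⟩, by simp only [← Nonneg.coe_smul]⟩

variable [TopologicalSpace E] [IsTopologicalAddGroup E] [ContinuousSMul ℝ E] [T2Space E]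

theorem PointedCone.isClosed_hull_of_finite {T : Set E} (hT : T.Finite) (ℓ : E →L[ℝ] ℝ)
    (hℓ : ∀ v ∈ T, 0 < ℓ v) : IsClosed (hull ℝ T : Set E) := by
  have := hT.fintype
  rw [← Subtype.range_coe (s := T), ← closure_subset_iff_isClosed]
  intro x hx
  obtain ⟨R, hxR⟩ := exists_gt (ℓ x)
  set f : (T → ℝ) → E := fun c => ∑ v, c v • (v : E)
  have hf : Continuous f :=
    continuous_finsetSum _ fun v _ => (continuous_apply v).smul continuous_const
  set box : Set (T → ℝ) := Icc 0 fun v => R / ℓ v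
  have hbox : IsClosed (f '' box) := (isCompact_Icc.image hf).isClosed
  have hlow : (hull ℝ (range ((↑) : T → E)) : Set E) ∩ {y | ℓ y < R} ⊆ f '' box := by
    rintro y ⟨hy, hyR⟩
    obtain ⟨c, hc, rfl⟩ := mem_hull_range_iff.1 hy
    refine ⟨c, ⟨hc, fun v => ?_⟩, rfl⟩
    have hterm : c v * ℓ v ≤ ℓ (f c) := by
      simp only [f, map_sum, map_smul, smul_eq_mul]
      exact Finset.single_le_sum (fun w _ => mul_nonneg (hc w) (hℓ w w.2).le) (Finset.mem_univ v)
    rw [le_div_iff₀ (hℓ v v.2)]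
    exact hterm.trans hyR.le
  have hx' : x ∈ closure (f '' box) := closure_mono (inter_comm _ _ ▸ hlow)
    ((isOpen_lt ℓ.continuous continuous_const).inter_closure ⟨hxR, hx⟩)
  obtain ⟨c, hc, rfl⟩ := hbox.closure_eq ▸ hx'
  exact mem_hull_range_iff.2 ⟨c, hc.1, rfl⟩

end Cone

section Lattice

variable {n : ℕ}

lemma natVecR_add (a b : Fin n → ℕ) : natVecR (a + b) = natVecR a + natVecR b := by
  ext j
  simp [natVecR]

lemma natVecR_mem_hull_of_mem_closure {S : Set (Fin n → ℕ)} {γ : Fin n → ℕ}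
    (hγ : γ ∈ AddSubmonoid.closure S) : natVecR γ ∈ hull ℝ (natVecR '' S) := by
  induction hγ using AddSubmonoid.closure_induction with
  | mem s hs => exact Submodule.subset_span (mem_image_of_mem _ hs)
  | zero => exact (show natVecR (0 : Fin n → ℕ) = 0 by ext; simp [natVecR]) ▸ zero_mem _
  | add a b _ _ ha hb => exact natVecR_add a b ▸ add_mem ha hb

lemma coneOf_subset_closure_hull (Γ : Set (Fin n → ℕ)) :
    coneOf Γ ⊆ closure (hull ℝ (natVecR '' Γ)) := by
  refine closure_mono ?_
  rintro _ ⟨k, c, g, hc, hg, rfl⟩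
  refine sum_mem fun i _ => ?_
  simpa only [← Nonneg.coe_smul] using Submodule.smul_mem _ (⟨c i, hc i⟩ : {c : ℝ // 0 ≤ c})
    (Submodule.subset_span (mem_image_of_mem natVecR (hg i)))

lemma isClosed_hull_natVecR_image {S : Set (Fin n → ℕ)} (hS : S.Finite) :
    IsClosed (hull ℝ (natVecR '' S) : Set (Fin n → ℝ)) := by
  have hzero : hull ℝ (natVecR '' S \ {0}) = hull ℝ (natVecR '' S) :=
    Submodule.span_sdiff_singleton_zero
  rw [← hzero]
  refine isClosed_hull_of_finite ((hS.image _).sdiff) (∑ j, ContinuousLinearMap.proj j) ?_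
  rintro _ ⟨⟨s, -, rfl⟩, hs⟩
  obtain ⟨j, hj⟩ := Function.ne_iff.1 hs
  simp only [FunLike.coe_sum, Finset.sum_apply, ContinuousLinearMap.proj_apply]
  refine Finset.sum_pos' (fun i _ => Nat.cast_nonneg (s i)) ⟨j, Finset.mem_univ j, ?_⟩
  simpa [natVecR, Nat.pos_iff_ne_zero] using hj

lemma coneOf_closure_subset_hull (S : Finset (Fin n → ℕ)) :
    coneOf (AddSubmonoid.closure (S : Set (Fin n → ℕ)) : Set (Fin n → ℕ)) ⊆
      (hull ℝ (natVecR '' (S : Set (Fin n → ℕ))) : Set (Fin n → ℝ)) := by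
  refine (coneOf_subset_closure_hull _).trans ?_
  rw [← (isClosed_hull_natVecR_image S.finite_toSet).closure_eq]
  refine closure_mono (Submodule.span_le.2 ?_)
  rintro _ ⟨γ, hγ, rfl⟩
  exact natVecR_mem_hull_of_mem_closure hγ

lemma exists_eq_add_add_sum_nsmul {ι : Type*} [Fintype ι] (v : ι → Fin n → ℕ)
    {β γ : Fin n → ℕ} {x : Fin n → ℝ} (hx : x ∈ hull ℝ (range fun i => natVecR (v i)))
    (hβ : natVecR β = natVecR γ + x) :
    ∃ ρ ≤ ∑ i, v i, ∃ m : ι → ℕ, β = γ + ρ + ∑ i, m i • v i := by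
  obtain ⟨c, hc, rfl⟩ := mem_hull_range_iff.1 hx
  set m : ι → ℕ := fun i => ⌊c i⌋₊
  have hcoord : ∀ j, (β j : ℝ) = γ j + ∑ i, c i * v i j := fun j => by
    simpa [natVecR, Finset.sum_apply] using congrFun hβ j
  have hlow : ∀ j, γ j + ∑ i, m i * v i j ≤ β j := fun j => by
    have : ((γ j + ∑ i, m i * v i j : ℕ) : ℝ) ≤ β j := by
      rw [hcoord j]
      push_cast
      gcongr with i
      exact Nat.floor_le (hc i)
    exact_mod_cast this
  have hhigh : ∀ j, β j ≤ γ j + ∑ i, m i * v i j + ∑ i, v i j := fun j => by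
    have : (β j : ℝ) ≤ ((γ j + ∑ i, m i * v i j + ∑ i, v i j : ℕ) : ℝ) := by
      rw [hcoord j]
      push_cast
      rw [add_assoc, ← Finset.sum_add_distrib]
      gcongr with i
      nlinarith [Nat.lt_floor_add_one (c i), (Nat.cast_nonneg (v i j) : (0 : ℝ) ≤ _)]
    exact_mod_cast this
  refine ⟨fun j => β j - (γ j + ∑ i, m i * v i j), fun j => ?_, m, funext fun j => ?_⟩
  · simp only [Finset.sum_apply]
    have := hhigh j
    omega
  · simp only [Pi.add_apply, Finset.sum_apply, Pi.smul_apply, smul_eq_mul]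
    have := hlow j
    omega

end Lattice

lemma AddSubgroup.exists_add_eq_of_mem_closure_image {A G : Type*} [AddMonoid A]
    [AddCommGroup G] (f : A →+ G) (N : AddSubmonoid A) {x : G}
    (hx : x ∈ AddSubgroup.closure (f '' N)) : ∃ a ∈ N, ∃ b ∈ N, x + f b = f a := by
  induction hx using AddSubgroup.closure_induction with
  | mem _ hx =>
    obtain ⟨a, ha, rfl⟩ := hx
    exact ⟨a, ha, 0, N.zero_mem, by simp⟩
  | zero => exact ⟨0, N.zero_mem, 0, N.zero_mem, by simp⟩
  | add x y _ _ hx hy =>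
    obtain ⟨a, ha, b, hb, hab⟩ := hx
    obtain ⟨a', ha', b', hb', hab'⟩ := hy
    refine ⟨a + a', add_mem ha ha', b + b', add_mem hb hb', ?_⟩
    rw [map_add, map_add, ← hab, ← hab']
    abel
  | neg x _ hx =>
    obtain ⟨a, ha, b, hb, hab⟩ := hx
    exact ⟨b, hb, a, ha, by rw [← hab]; abel⟩

lemma exists_add_eq_of_closure_natCast_eq_top {n : ℕ} {M : AddSubmonoid (Fin n → ℕ)}
    (hM : AddSubgroup.closure ((fun γ : Fin n → ℕ => fun i => (γ i : ℤ)) '' M) = ⊤)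
    (ρ : Fin n → ℕ) : ∃ a ∈ M, ∃ b ∈ M, ρ + b = a := by
  let f : (Fin n → ℕ) →+ (Fin n → ℤ) := (Nat.castAddMonoidHom ℤ).compLeft (Fin n)
  obtain ⟨a, ha, b, hb, hab⟩ :=
    AddSubgroup.exists_add_eq_of_mem_closure_image f M (x := f ρ) (hM ▸ AddSubgroup.mem_top _)
  refine ⟨a, ha, b, hb, funext fun j => ?_⟩
  have := congrFun hab j
  simp only [f, Pi.add_apply, AddMonoidHom.compLeft_apply, Function.comp_apply,
    Nat.coe_castAddMonoidHom] at this ⊢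
  exact_mod_cast this

lemma AddSubmonoid.exists_add_mem_of_forall_exists_add_eq {A : Type*} [AddCommMonoid A]
    (M : AddSubmonoid A) (F : Finset A) (hF : ∀ ρ ∈ F, ∃ a ∈ M, ∃ b ∈ M, ρ + b = a) :
    ∃ γ ∈ M, ∀ ρ ∈ F, γ + ρ ∈ M := by
  classical
  induction F using Finset.induction_on with
  | empty => exact ⟨0, M.zero_mem, by simp⟩
  | insert ρ₀ F _ ih =>
    obtain ⟨γ, hγ, hγF⟩ := ih fun ρ hρ => hF ρ (Finset.mem_insert_of_mem hρ)
    obtain ⟨_, ha, b, hb, rfl⟩ := hF ρ₀ (Finset.mem_insert_self _ _)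
    refine ⟨γ + b, add_mem hγ hb, (Finset.forall_mem_insert _ _ _).2 ⟨?_, fun ρ hρ => ?_⟩⟩
    · convert add_mem hγ ha using 1
      abel
    · convert add_mem (hγF ρ hρ) hb using 1
      abel

theorem khovanskii_general (d : ℕ) (Γ : Set (Fin (d+1) → ℕ))
    (hfg : ∃ S : Finset (Fin (d+1) → ℕ), (S : Set (Fin (d+1) → ℕ)) ⊆ Γ ∧
      Γ = ↑(AddSubmonoid.closure (S : Set (Fin (d+1) → ℕ))))
    (hgen : AddSubgroup.closure
        ((fun γ : Fin (d+1) → ℕ => (fun i => (γ i : ℤ))) '' Γ) = ⊤) :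
    ∃ γ ∈ Γ, ∀ β : Fin (d+1) → ℕ,
      (∃ x ∈ coneOf Γ, natVecR β = natVecR γ + x) → β ∈ Γ := by
  obtain ⟨S, -, rfl⟩ := hfg
  obtain ⟨γ, hγ, hshift⟩ := AddSubmonoid.exists_add_mem_of_forall_exists_add_eq _
    (Finset.Iic (∑ s ∈ S, s)) fun ρ _ => exists_add_eq_of_closure_natCast_eq_top hgen ρ
  refine ⟨γ, hγ, fun β ⟨x, hx, hβ⟩ => ?_⟩
  have hx' := coneOf_closure_subset_hull S hx
  rw [image_eq_range] at hx'
  obtain ⟨ρ, hρ, m, rfl⟩ := exists_eq_add_add_sum_nsmul (fun s : S => (s : Fin (d+1) → ℕ)) hx' hβ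
  refine add_mem (hshift ρ ?_) (sum_mem fun s _ => nsmul_mem (AddSubmonoid.subset_closure s.2) _)
  rwa [Finset.mem_Iic, ← Finset.sum_coe_sort]

/-- Khovanskii's theorem: if a sub-semigroup `Γ` of `ℕ^{d+1}` is finitely generated as a
semigroup and generates `ℤ^{d+1}` as a group, then there exists `γ ∈ Γ` such that
`(γ + Σ(Γ)) ∩ ℕ^{d+1} ⊆ Γ`. -/
theorem khovanskii (d : ℕ) (hd : 1 ≤ d) (Γ : Set (Fin (d+1) → ℕ))
    (h0 : (0 : Fin (d+1) → ℕ) ∈ Γ)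
    (hadd : ∀ x ∈ Γ, ∀ y ∈ Γ, x + y ∈ Γ)
    (hfg : ∃ S : Finset (Fin (d+1) → ℕ), (S : Set (Fin (d+1) → ℕ)) ⊆ Γ ∧
      Γ = ↑(AddSubmonoid.closure (S : Set (Fin (d+1) → ℕ))))
    (hgen : AddSubgroup.closure
        ((fun γ : Fin (d+1) → ℕ => (fun i => (γ i : ℤ))) '' Γ) = ⊤) :
    ∃ γ ∈ Γ, ∀ β : Fin (d+1) → ℕ,
      (∃ x ∈ coneOf Γ, natVecR β = natVecR γ + x) → β ∈ Γ :=
  khovanskii_general d Γ hfg hgen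
end

section
/- Let d ≥ 1 and let Γ be an additive sub-semigroup of ℕ^{d+1} that generates ℤ^{d+1} as a group. Let D be a compact convex subset of ℝ^d contained in the interior of Δ(Γ). Then there exists m₀ > 0 such that for every integer m > m₀ one has D ∩ Λ_m(Γ) = D ∩ (1/m)ℤ^d; equivalently, every point α ∈ D with mα ∈ ℤ^d satisfies (mα, m) ∈ Γ. -/
/-- `Δ(Γ) = {x ∈ ℝ^d : (x,1) ∈ Σ(Γ)}`. -/
def deltaOf {d : ℕ} (Γ : Set (Fin (d+1) → ℕ)) : Set (Fin d → ℝ) :=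
  { x | Fin.snoc x (1 : ℝ) ∈ coneOf Γ }

/-- `Λ_m(Γ) = {x ∈ ℝ^d : mx ∈ ℕ^d and (mx, m) ∈ Γ}`. -/
def lambdaOf {d : ℕ} (Γ : Set (Fin (d+1) → ℕ)) (m : ℕ) : Set (Fin d → ℝ) :=
  { x | ∃ β : Fin d → ℕ, (x = fun i => (β i : ℝ) / (m : ℝ)) ∧ Fin.snoc β m ∈ Γ }

/-!
Points `(x, 1)` with `x ∈ D` lie in the interior of the cone spanned by `Γ`. An interior point
of a cone already lies in the interior of the cone spanned by finitely many generators, so by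
compactness there are a finite `S ⊆ Γ` and `r > 0` such that the `r`-ball around each such point
lies in the cone spanned by `S`; enlarge `S` so that it also generates `ℤ^{d+1}`.

If `u ∈ ℕ^{d+1}` equals `∑ c γ • γ` with real coefficients `c γ ≥ T`, then
`u - ∑ ⌊c γ⌋ • γ = ∑ fract (c γ) • γ` is an integral vector in a fixed finite box. Fixing integer
coordinates over `S` for each point of the box, `u` is a combination of `S` with nonnegative
integer coefficients once `T` exceeds all their negatives, hence `u ∈ Γ`. Finally, for `m` large,
`(x, 1) - (T / m) ∑ γ` stays in the `r`-ball, so `m • (x, 1) = ∑ c γ • γ` with every `c γ ≥ T`.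
-/

open Metric Set Filter

theorem Convex.interior_closure_eq_interior {V : Type*} [NormedAddCommGroup V] [NormedSpace ℝ V]
    [FiniteDimensional ℝ V] {s : Set V} (hs : Convex ℝ s) : interior (closure s) = interior s := by
  rcases (interior (closure s)).eq_empty_or_nonempty with h | h
  · exact subset_antisymm (h ▸ empty_subset _) (interior_mono subset_closure)
  refine hs.interior_closure_eq_interior_of_nonempty_interior ?_
  rw [hs.interior_nonempty_iff_affineSpan_eq_top, eq_top_iff]
  have hclosed : IsClosed (affineSpan ℝ s : Set V) :=
    (AffineSubspace.isClosed_direction_iff _).1 (Submodule.closed_of_finiteDimensional _)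
  calc ⊤ = affineSpan ℝ (closure s) := (hs.closure.interior_nonempty_iff_affineSpan_eq_top.1 h).symm
    _ ≤ affineSpan ℝ s := affineSpan_le.2 (closure_minimal (subset_affineSpan ℝ s) hclosed)

theorem Submodule.exists_finset_subset_span_eq_top {R M : Type*} [Semiring R] [AddCommMonoid M]
    [Module R M] [Module.Finite R M] {s : Set M} (hs : span R s = ⊤) :
    ∃ t : Finset M, ↑t ⊆ s ∧ span R (t : Set M) = ⊤ := by
  classical
  obtain ⟨g, hg⟩ := Module.Finite.fg_top (R := R) (M := M)
  choose T hTs hxT using fun x : M => mem_span_finite_of_mem_span (hs ▸ mem_top (R := R) (x := x))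
  refine ⟨g.biUnion T, by simpa using fun x _ => hTs x, eq_top_iff.2 <| hg ▸ span_le.2 ?_⟩
  exact fun x hx => span_mono (Finset.coe_subset.2 (Finset.subset_biUnion_of_mem T hx)) (hxT x)

section FiniteGenerators

variable {ι : Type*} [Fintype ι]

lemma exists_finite_subset_mem_interior_convexHull {C : Set (ι → ℝ)} {z : ι → ℝ}
    (hz : z ∈ interior C) : ∃ V ⊆ C, V.Finite ∧ z ∈ interior (convexHull ℝ V) := by
  obtain ⟨ε, hε, hball⟩ := nhds_basis_closedBall.mem_iff.1 (mem_interior_iff_mem_nhds.1 hz)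
  set V : Set (ι → ℝ) := univ.pi fun i => {z i - ε, z i + ε}
  have hV : convexHull ℝ V = closedBall z ε := by
    rw [convexHull_pi, closedBall_pi _ hε.le]
    congr! with i
    rw [convexHull_pair, segment_eq_Icc (by linarith), Real.closedBall_eq_Icc]
  refine ⟨V, (subset_convexHull ℝ V).trans (hV ▸ hball), Set.Finite.pi fun i => by simp, ?_⟩
  rw [hV]
  exact mem_interior_iff_mem_nhds.2 (closedBall_mem_nhds z hε)

lemma exists_finset_subset_mem_interior_hull {s : Set (ι → ℝ)} {z : ι → ℝ}
    (hz : z ∈ interior (PointedCone.hull ℝ s : Set (ι → ℝ))) :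
    ∃ t : Finset (ι → ℝ), ↑t ⊆ s ∧ z ∈ interior (PointedCone.hull ℝ (t : Set (ι → ℝ))) := by
  classical
  obtain ⟨V, hVs, hV, hzV⟩ := exists_finite_subset_mem_interior_convexHull hz
  choose! t hts hvt using fun v (hv : v ∈ V) => Submodule.mem_span_finite_of_mem_span (hVs hv)
  refine ⟨hV.toFinset.biUnion t, by simpa using hts, interior_mono ?_ hzV⟩
  refine convexHull_min (fun v hv => ?_) (PointedCone.convex _)
  exact Submodule.span_mono (Finset.coe_subset.2 <| Finset.subset_biUnion_of_mem t
    (hV.mem_toFinset.2 hv)) (hvt v hv)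

lemma IsCompact.exists_finset_thickening_subset_hull {s K : Set (ι → ℝ)} (hK : IsCompact K)
    (hKs : K ⊆ interior (PointedCone.hull ℝ s : Set (ι → ℝ))) :
    ∃ t : Finset (ι → ℝ), ↑t ⊆ s ∧ ∃ r > 0,
      thickening r K ⊆ (PointedCone.hull ℝ (t : Set (ι → ℝ)) : Set (ι → ℝ)) := by
  classical
  let U : {t : Finset (ι → ℝ) // ↑t ⊆ s} → Set (ι → ℝ) := fun t =>
    interior (PointedCone.hull ℝ (t.1 : Set (ι → ℝ)))
  have hcover : K ⊆ ⋃ t, U t := fun z hz =>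
    let ⟨t, hts, hzt⟩ := exists_finset_subset_mem_interior_hull (hKs hz)
    mem_iUnion.2 ⟨⟨t, hts⟩, hzt⟩
  have hdir : Directed (· ⊆ ·) U := fun t₁ t₂ =>
    ⟨⟨t₁.1 ∪ t₂.1, by simpa using And.intro t₁.2 t₂.2⟩,
      interior_mono (Submodule.span_mono (by simp)), interior_mono (Submodule.span_mono (by simp))⟩
  have : Nonempty {t : Finset (ι → ℝ) // ↑t ⊆ s} := ⟨⟨∅, by simp⟩⟩
  obtain ⟨t, hKt⟩ := hK.elim_directed_cover U (fun _ => isOpen_interior) hcover hdir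
  obtain ⟨r, hr, hrt⟩ := hK.exists_thickening_subset_open isOpen_interior hKt
  exact ⟨t.1, t.2, r, hr, hrt.trans interior_subset⟩

lemma exists_coeff_ge_of_ball_subset_hull {κ E : Type*} [NormedAddCommGroup E] [NormedSpace ℝ E]
    {S : Finset κ} {v : κ → E} {w : E} {ρ T : ℝ}
    (hball : ball w ρ ⊆ PointedCone.hull ℝ (v '' S)) (hT : ‖T • ∑ i ∈ S, v i‖ < ρ) :
    ∃ c : κ → ℝ, (∀ i ∈ S, T ≤ c i) ∧ w = ∑ i ∈ S, c i • v i := by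
  have hy : w - T • ∑ i ∈ S, v i ∈ PointedCone.hull ℝ (v '' S) :=
    hball (by simpa [dist_eq_norm] using hT)
  obtain ⟨l, hlS, hl⟩ := (Finsupp.mem_span_image_iff_linearCombination _).1 hy
  rw [Finsupp.linearCombination_apply, Finsupp.sum_of_support_subset l hlS _ (by simp),
    eq_sub_iff_add_eq] at hl
  refine ⟨fun i => l i + T, fun i _ => le_add_of_nonneg_left (l i).2, ?_⟩
  simp_rw [add_smul, Finset.sum_add_distrib, ← Finset.smul_sum, ← hl]
  rfl

end FiniteGenerators

section Cone

variable {n : ℕ} {Γ : Set (Fin n → ℕ)}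

lemma coneOf_eq_closure_hull (Γ : Set (Fin n → ℕ)) :
    coneOf Γ = closure (PointedCone.hull ℝ (natVecR '' Γ) : Set (Fin n → ℝ)) := by
  unfold coneOf
  congr 1
  ext x
  simp only [SetLike.mem_coe, Submodule.mem_span_set', mem_ofPred_eq]
  constructor
  · rintro ⟨k, c, g, hc, hg, rfl⟩
    exact ⟨k, fun i => ⟨c i, hc i⟩, fun i => ⟨natVecR (g i), g i, hg i, rfl⟩, rfl⟩
  · rintro ⟨k, c, v, rfl⟩
    choose g hg hgv using fun i => (v i).2
    exact ⟨k, fun i => c i, g, fun i => (c i).2, hg, by simp_rw [hgv]; rfl⟩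

lemma nonneg_of_mem_coneOf {x : Fin n → ℝ} (hx : x ∈ coneOf Γ) : 0 ≤ x := by
  rw [coneOf_eq_closure_hull] at hx
  refine closure_minimal (fun y hy => ?_) isClosed_Ici hx
  refine (PointedCone.mem_positive ℝ _).1 (Submodule.span_le.2 ?_ hy)
  rintro _ ⟨γ, -, rfl⟩
  exact (PointedCone.mem_positive ℝ _).2 fun i => Nat.cast_nonneg (γ i)

lemma smul_mem_coneOf {t : ℝ} (ht : 0 ≤ t) {v : Fin n → ℝ} (hv : v ∈ coneOf Γ) :
    t • v ∈ coneOf Γ := by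
  rw [coneOf_eq_closure_hull, ← PointedCone.coe_closure] at hv ⊢
  exact PointedCone.smul_mem _ ht hv

end Cone

section Slice

variable {d : ℕ} {Γ : Set (Fin (d + 1) → ℕ)}

lemma nonneg_of_mem_deltaOf {x : Fin d → ℝ} (hx : x ∈ deltaOf Γ) : 0 ≤ x := fun i => by
  simpa using nonneg_of_mem_coneOf hx (Fin.castSucc i)

lemma snoc_one_mem_interior_coneOf {x : Fin d → ℝ} (hx : x ∈ interior (deltaOf Γ)) :
    (Fin.snoc x 1 : Fin (d + 1) → ℝ) ∈ interior (coneOf Γ) := by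
  -- `w = w_last • (φ w, 1)` exhibits a neighbourhood of `(x, 1)` as a union of rays through `Δ(Γ)`
  let φ : (Fin (d + 1) → ℝ) → Fin d → ℝ := fun w => (w (Fin.last d))⁻¹ • Fin.init w
  have hφ : ContinuousOn φ {w | 0 < w (Fin.last d)} :=
    ((continuous_apply _).continuousOn.inv₀ fun _ hw => ne_of_gt hw).smul
      (by fun_prop : Continuous fun w : Fin (d + 1) → ℝ => Fin.init w).continuousOn
  refine interior_maximal ?_ (hφ.isOpen_inter_preimage
    (isOpen_lt continuous_const (continuous_apply _)) isOpen_interior)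
    ⟨by simp, by simpa [φ] using hx⟩
  rintro w ⟨hw₀ : 0 < w (Fin.last d), hw⟩
  have hw_eq : w = w (Fin.last d) • Fin.snoc (φ w) 1 := by
    ext i
    refine Fin.lastCases ?_ (fun j => ?_) i
    · simp
    · simp [φ, Fin.init, hw₀.ne']
  rw [hw_eq]
  exact smul_mem_coneOf hw₀.le (interior_subset hw : φ w ∈ deltaOf Γ)

lemma exists_finset_forall_ball_subset_hull {D : Set (Fin d → ℝ)} (hDc : IsCompact D)
    (hD : D ⊆ interior (deltaOf Γ)) :
    ∃ S : Finset (Fin (d + 1) → ℕ), ↑S ⊆ Γ ∧ ∃ r > 0, ∀ x ∈ D,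
      ball (Fin.snoc x 1) r ⊆
        (PointedCone.hull ℝ (natVecR '' (S : Set (Fin (d + 1) → ℕ))) : Set (Fin (d + 1) → ℝ)) := by
  classical
  set e : (Fin d → ℝ) → Fin (d + 1) → ℝ := fun x => Fin.snoc x 1
  have hK : IsCompact (e '' D) := hDc.image (by fun_prop)
  have hKs : e '' D ⊆ interior (PointedCone.hull ℝ (natVecR '' Γ) : Set (Fin (d + 1) → ℝ)) := by
    rintro _ ⟨x, hx, rfl⟩
    rw [← (PointedCone.convex _).interior_closure_eq_interior, ← coneOf_eq_closure_hull]
    exact snoc_one_mem_interior_coneOf (hD hx)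
  obtain ⟨t, hts, r, hr, hrt⟩ := hK.exists_finset_thickening_subset_hull hKs
  obtain ⟨S, hSΓ, rfl⟩ := Finset.subset_set_image_iff.1 hts
  refine ⟨S, hSΓ, r, hr, fun x hx => (ball_subset_thickening (mem_image_of_mem e hx) r).trans ?_⟩
  rwa [Finset.coe_image] at hrt

end Slice

section Lattice

variable {n : ℕ}

def natVecZ (γ : Fin n → ℕ) : Fin n → ℤ := fun i => (γ i : ℤ)

lemma exists_finset_subset_span_natVecZ_eq_top {Γ : Set (Fin n → ℕ)}
    (hΓ : AddSubgroup.closure (natVecZ '' Γ) = ⊤) :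
    ∃ S : Finset (Fin n → ℕ), ↑S ⊆ Γ ∧ Submodule.span ℤ (natVecZ '' (S : Set (Fin n → ℕ))) = ⊤ := by
  classical
  rw [← Submodule.span_int_eq_addSubgroupClosure, Submodule.toAddSubgroup_eq_top] at hΓ
  obtain ⟨t, htΓ, ht⟩ := Submodule.exists_finset_subset_span_eq_top hΓ
  obtain ⟨S, hSΓ, rfl⟩ := Finset.subset_set_image_iff.1 htΓ
  exact ⟨S, hSΓ, by simpa using ht⟩

lemma exists_coeffs_of_span_natVecZ_eq_top {S : Finset (Fin n → ℕ)}
    (hS : Submodule.span ℤ (natVecZ '' (S : Set (Fin n → ℕ))) = ⊤) (f : Fin n → ℤ) :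
    ∃ b : (Fin n → ℕ) → ℤ, ∀ j, f j = ∑ γ ∈ S, b γ * γ j := by
  obtain ⟨l, hlS, rfl⟩ :=
    (Finsupp.mem_span_image_iff_linearCombination ℤ).1 (hS ▸ Submodule.mem_top (x := f))
  refine ⟨l, fun j => ?_⟩
  rw [Finsupp.linearCombination_apply, Finsupp.sum_of_support_subset l hlS _ (by simp)]
  simp [natVecZ, Finset.sum_apply]

theorem exists_forall_mem_of_coeff_ge (Γ : AddSubmonoid (Fin n → ℕ)) {S : Finset (Fin n → ℕ)}
    (hSΓ : (S : Set (Fin n → ℕ)) ⊆ Γ)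
    (hS : Submodule.span ℤ (natVecZ '' (S : Set (Fin n → ℕ))) = ⊤) :
    ∃ T : ℝ, ∀ (u : Fin n → ℕ) (c : (Fin n → ℕ) → ℝ), (∀ γ ∈ S, T ≤ c γ) →
      natVecR u = ∑ γ ∈ S, c γ • natVecR γ → u ∈ Γ := by
  choose b hb using exists_coeffs_of_span_natVecZ_eq_top hS
  let B := Icc (0 : Fin n → ℤ) (∑ γ ∈ S, natVecZ γ)
  obtain ⟨T, hT⟩ : BddAbove ((fun p => -b p.1 p.2) '' (B ×ˢ S)) :=
    (((finite_Icc _ _).prod S.finite_toSet).image _).bddAbove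
  refine ⟨T, fun u c hc hu => ?_⟩
  have hu' : ∀ j, (u j : ℝ) = ∑ γ ∈ S, c γ * γ j := fun j => by
    simpa [natVecR, Finset.sum_apply] using congrFun hu j
  let f : Fin n → ℤ := fun j => u j - ∑ γ ∈ S, ⌊c γ⌋ * γ j
  have hf : ∀ j, (f j : ℝ) = ∑ γ ∈ S, Int.fract (c γ) * γ j := fun j => by
    push_cast [f]
    rw [hu', ← Finset.sum_sub_distrib]
    exact Finset.sum_congr rfl fun γ _ => by rw [Int.fract]; ring
  have hfB : f ∈ B := by
    refine ⟨fun j => ?_, fun j => ?_⟩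
    · have : (0 : ℝ) ≤ f j := hf j ▸ Finset.sum_nonneg fun γ _ => by positivity
      exact_mod_cast this
    · have : (f j : ℝ) ≤ ∑ γ ∈ S, (γ j : ℝ) := hf j ▸ Finset.sum_le_sum fun γ _ =>
        mul_le_of_le_one_left (Nat.cast_nonneg _) (Int.fract_lt_one _).le
      simpa [natVecZ, Finset.sum_apply] using (by exact_mod_cast this : f j ≤ ∑ γ ∈ S, (γ j : ℤ))
  have ha : ∀ γ ∈ S, 0 ≤ ⌊c γ⌋ + b f γ := fun γ hγ => by
    have h₁ := hT ⟨(f, γ), ⟨hfB, hγ⟩, rfl⟩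
    have h₂ := Int.le_floor.2 (hc γ hγ)
    simp only at h₁
    omega
  have hu_eq : u = ∑ γ ∈ S, (⌊c γ⌋ + b f γ).toNat • γ := by
    ext j
    zify
    simp only [Finset.sum_apply, Pi.smul_apply, smul_eq_mul, Nat.cast_sum, Nat.cast_mul]
    rw [Finset.sum_congr rfl fun γ hγ => by rw [Int.toNat_of_nonneg (ha γ hγ)]]
    simp only [add_mul, Finset.sum_add_distrib, ← hb f j, f]
    ring
  exact hu_eq ▸ Γ.sum_mem fun γ hγ => Γ.nsmul_mem (hSΓ hγ) _

end Lattice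

lemma exists_nat_div_eq_of_nonneg {d m : ℕ} (hm : 0 < m) {x : Fin d → ℝ} (hx₀ : 0 ≤ x)
    (hx : ∀ i, ∃ k : ℤ, x i = (k : ℝ) / (m : ℝ)) :
    ∃ β : Fin d → ℕ, x = fun i => (β i : ℝ) / (m : ℝ) := by
  choose k hk using hx
  refine ⟨fun i => (k i).toNat, funext fun i => ?_⟩
  have hk₀ : 0 ≤ k i := by
    have : (0 : ℝ) ≤ x i := hx₀ i
    rw [hk i, le_div_iff₀ (by positivity), zero_mul] at this
    exact_mod_cast this
  rw [hk i]
  exact congrArg (· / (m : ℝ)) (by exact_mod_cast (Int.toNat_of_nonneg hk₀).symm)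

lemma natVecR_snoc {d m : ℕ} (hm : 0 < m) (β : Fin d → ℕ) :
    natVecR (Fin.snoc β m : Fin (d + 1) → ℕ) = (m : ℝ) • Fin.snoc (fun i => (β i : ℝ) / m) 1 := by
  ext i
  refine Fin.lastCases ?_ (fun j => ?_) i
  · simp [natVecR]
  · simp only [natVecR, Fin.snoc_castSucc, Pi.smul_apply, smul_eq_mul]
    field_simp

theorem lattice_points_in_interior_general (d : ℕ) (Γ : Set (Fin (d+1) → ℕ))
    (h0 : (0 : Fin (d+1) → ℕ) ∈ Γ)
    (hadd : ∀ x ∈ Γ, ∀ y ∈ Γ, x + y ∈ Γ)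
    (hgen : AddSubgroup.closure
        ((fun γ : Fin (d+1) → ℕ => (fun i => (γ i : ℤ))) '' Γ) = ⊤)
    (D : Set (Fin d → ℝ)) (hDc : IsCompact D)
    (hD : D ⊆ interior (deltaOf Γ)) :
    ∃ m₀ : ℕ, 0 < m₀ ∧ ∀ m : ℕ, m₀ < m →
      D ∩ lambdaOf Γ m = D ∩ { x : Fin d → ℝ | ∀ i, ∃ k : ℤ, x i = (k : ℝ) / (m : ℝ) } := by
  let M : AddSubmonoid (Fin (d + 1) → ℕ) := ⟨⟨Γ, fun ha hb => hadd _ ha _ hb⟩, h0⟩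
  obtain ⟨S₁, hS₁Γ, r, hr, hball⟩ := exists_finset_forall_ball_subset_hull hDc hD
  obtain ⟨S₂, hS₂Γ, hS₂⟩ := exists_finset_subset_span_natVecZ_eq_top hgen
  obtain ⟨T, hT⟩ := exists_forall_mem_of_coeff_ge M (S := S₁ ∪ S₂)
    (by simpa using ⟨hS₁Γ, hS₂Γ⟩) (eq_top_mono (Submodule.span_mono (image_mono (by simp))) hS₂)
  have hsmall : ∀ᶠ m : ℕ in atTop, ‖(T / m) • ∑ γ ∈ S₁ ∪ S₂, natVecR γ‖ < r := by
    have := (tendsto_const_div_atTop_nhds_zero_nat T).smul_const (∑ γ ∈ S₁ ∪ S₂, natVecR γ)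
    rw [zero_smul] at this
    simpa using this.eventually (ball_mem_nhds 0 hr)
  obtain ⟨m₀, hm₀⟩ := eventually_atTop.1 hsmall
  refine ⟨m₀ + 1, m₀.succ_pos, fun m hm => ?_⟩
  have hm_pos : 0 < m := by omega
  ext x
  refine ⟨fun ⟨hxD, β, hxβ, _⟩ => ⟨hxD, fun i => ⟨β i, by simp [hxβ]⟩⟩,
    fun ⟨hxD, hx⟩ => ⟨hxD, ?_⟩⟩
  obtain ⟨β, rfl⟩ :=
    exists_nat_div_eq_of_nonneg hm_pos (nonneg_of_mem_deltaOf (interior_subset (hD hxD))) hx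
  obtain ⟨c, hcT, hc⟩ := exists_coeff_ge_of_ball_subset_hull
    ((hball _ hxD).trans (Submodule.span_mono (image_mono (by simp)))) (hm₀ m (by omega))
  refine ⟨β, rfl, hT _ (fun γ => m * c γ) (fun γ hγ => ?_) ?_⟩
  · exact (div_le_iff₀' (by positivity)).1 (hcT γ hγ)
  · rw [natVecR_snoc hm_pos, hc, Finset.smul_sum]
    simp_rw [smul_smul]

/-- For any compact convex `D` contained in the interior of `Δ(Γ)`, there is `m₀` such that
for all `m > m₀`, `D ∩ Λ_m(Γ) = D ∩ (1/m)ℤ^d`. -/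
theorem lattice_points_in_interior (d : ℕ) (hd : 1 ≤ d) (Γ : Set (Fin (d+1) → ℕ))
    (h0 : (0 : Fin (d+1) → ℕ) ∈ Γ)
    (hadd : ∀ x ∈ Γ, ∀ y ∈ Γ, x + y ∈ Γ)
    (hgen : AddSubgroup.closure
        ((fun γ : Fin (d+1) → ℕ => (fun i => (γ i : ℤ))) '' Γ) = ⊤)
    (D : Set (Fin d → ℝ)) (hDc : IsCompact D) (hDconv : Convex ℝ D)
    (hD : D ⊆ interior (deltaOf Γ)) :
    ∃ m₀ : ℕ, 0 < m₀ ∧ ∀ m : ℕ, m₀ < m →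
      D ∩ lambdaOf Γ m = D ∩ { x : Fin d → ℝ | ∀ i, ∃ k : ℤ, x i = (k : ℝ) / (m : ℝ) } :=
  lattice_points_in_interior_general d Γ h0 hadd hgen D hDc hD
end

section
/- Let d ≥ 1, let Γ be an additive sub-semigroup of ℕ^{d+1} that generates ℤ^{d+1} as a group, and let F : Γ → ℝ be subadditive and satisfy F(γ) ≥ C·|γ| for all γ ∈ Γ, for some real constant C. Let c : Δ(Γ)° → ℝ be the limit function c(α) = lim_{k→∞} F((m_k α_k, m_k)) / m_k. Then for every (β, m) ∈ Γ with m ≥ 1 such that α := β/m lies in Δ(Γ)°, one has c(α) = inf_{k ≥ 1} F(k·(β,m)) / (km), the sequence k ↦ F(k·(β,m))/(km) converges to c(α), and in particular c(α) ≤ F((β,m))/m. -/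
open Filter Topology

/-! The subsequence `k ↦ F(k·(β,m))/(km)` of the sequence defining `c(α)` converges to `c(α)`
by hypothesis. Subadditivity gives `F(jn·γ) ≤ j F(n·γ)`, so along the multiples of any fixed
`n` the terms stay below the `n`-th one; passing to the limit, `c(α)` is a lower bound of the
sequence, and being also its limit it is its infimum. -/

theorem Fin.snoc_nsmul {n : ℕ} {M : Type*} [AddMonoid M] (k : ℕ) (β : Fin n → M) (m : M) :
    Fin.snoc (k • β) (k • m) = k • (Fin.snoc β m : Fin (n + 1) → M) := by
  ext i
  induction i using Fin.lastCases <;> simp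

section AddClosed

variable {M : Type*} [AddMonoid M] {S : Set M} (hS : ∀ x ∈ S, ∀ y ∈ S, x + y ∈ S)
include hS

theorem succ_nsmul_mem_of_add_mem {x : M} (hx : x ∈ S) (n : ℕ) : (n + 1) • x ∈ S := by
  induction n with
  | zero => simpa using hx
  | succ n ih => rw [succ_nsmul]; exact hS _ ih _ hx

theorem nsmul_mem_of_add_mem {x : M} (hx : x ∈ S) {n : ℕ} (hn : 0 < n) : n • x ∈ S := by
  obtain ⟨n, rfl⟩ := Nat.exists_eq_add_of_lt hn
  simpa [add_comm] using succ_nsmul_mem_of_add_mem hS hx n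

theorem le_succ_mul_of_subadditive {F : M → ℝ} (hF : ∀ x ∈ S, ∀ y ∈ S, F (x + y) ≤ F x + F y)
    {x : M} (hx : x ∈ S) (n : ℕ) : F ((n + 1) • x) ≤ (n + 1) * F x := by
  induction n with
  | zero => simp
  | succ n ih =>
    rw [succ_nsmul]
    have := hF _ (succ_nsmul_mem_of_add_mem hS hx n) _ hx
    push_cast
    linarith

end AddClosed

section SubhomogeneousSequence

variable {f : ℕ → ℝ} {L : ℝ}
  (hf : ∀ j n, 0 < n → f ((j + 1) * n) ≤ (j + 1) * f n)
  (hL : Tendsto (fun n => f n / n) atTop (𝓝 L))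
include hf hL

theorem le_div_of_tendsto_div {n : ℕ} (hn : 0 < n) : L ≤ f n / n := by
  have hsub : Tendsto (fun j : ℕ => (j + 1) * n) atTop atTop :=
    tendsto_id.atTop_mul_const' hn |>.comp (tendsto_add_atTop_nat 1)
  refine le_of_tendsto (hL.comp hsub) (Eventually.of_forall fun j => ?_)
  calc f ((j + 1) * n) / ↑((j + 1) * n) ≤ (j + 1) * f n / ((j + 1) * n) := by
        push_cast; gcongr; exact hf j n hn
    _ = f n / n := by field_simp

theorem eq_iInf_of_tendsto_div : L = ⨅ k : ℕ, f (k + 1) / (k + 1) := by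
  have hle (k : ℕ) : L ≤ f (k + 1) / (k + 1) := by
    exact_mod_cast le_div_of_tendsto_div hf hL k.succ_pos
  have hshift : Tendsto (fun k : ℕ => f (k + 1) / (k + 1)) atTop (𝓝 L) := by
    simpa using (tendsto_add_atTop_iff_nat 1).2 hL
  exact le_antisymm (le_ciInf hle) (ge_of_tendsto hshift (Eventually.of_forall fun k =>
    ciInf_le ⟨L, by rintro _ ⟨k, rfl⟩; exact hle k⟩ k))

end SubhomogeneousSequence

theorem chebyshev_inf_general (d : ℕ) (Γ : Set (Fin (d+1) → ℕ))
    (hadd : ∀ x ∈ Γ, ∀ y ∈ Γ, x + y ∈ Γ)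
    (F : (Fin (d+1) → ℕ) → ℝ)
    (hsub : ∀ x ∈ Γ, ∀ y ∈ Γ, F (x + y) ≤ F x + F y)
    (c : (Fin d → ℝ) → ℝ)
    (hc : ∀ α ∈ interior (deltaOf Γ),
      ∀ (m : ℕ → ℕ) (β : ℕ → Fin d → ℕ),
        (∀ k, 0 < m k) →
        Tendsto (fun k => m k) atTop atTop →
        (∀ k, Fin.snoc (β k) (m k) ∈ Γ) →
        Tendsto (fun k => (fun i => (β k i : ℝ) / (m k : ℝ))) atTop (nhds α) →
        Tendsto (fun k => F (Fin.snoc (β k) (m k)) / (m k : ℝ)) atTop (nhds (c α))) :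
    ∀ (β : Fin d → ℕ) (m : ℕ), 1 ≤ m → Fin.snoc β m ∈ Γ →
      (fun i => (β i : ℝ) / (m : ℝ)) ∈ interior (deltaOf Γ) →
      (c (fun i => (β i : ℝ) / (m : ℝ)) =
          ⨅ k : ℕ, F ((k + 1) • Fin.snoc β m) / (((k : ℝ) + 1) * (m : ℝ))) ∧
      Tendsto (fun k : ℕ => F ((k + 1) • Fin.snoc β m) / (((k : ℝ) + 1) * (m : ℝ)))
        atTop (nhds (c (fun i => (β i : ℝ) / (m : ℝ)))) ∧
      c (fun i => (β i : ℝ) / (m : ℝ)) ≤ F (Fin.snoc β m) / (m : ℝ) := by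
  intro β m hm hmem hα
  set f : ℕ → ℝ := fun n => F (n • Fin.snoc β m) / m
  have hseq : (fun k : ℕ => F ((k + 1) • Fin.snoc β m) / (((k : ℝ) + 1) * (m : ℝ))) =
      fun k => f (k + 1) / (k + 1) := by
    ext k; simp [f, div_div, mul_comm]
  have hf (j n : ℕ) (hn : 0 < n) : f ((j + 1) * n) ≤ (j + 1) * f n := by
    simp only [f, mul_div_assoc', mul_nsmul']
    gcongr
    exact le_succ_mul_of_subadditive hadd hsub (nsmul_mem_of_add_mem hadd hmem hn) j
  have hsnoc (k : ℕ) :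
      (Fin.snoc ((k + 1) • β) ((k + 1) * m) : Fin (d + 1) → ℕ) = (k + 1) • Fin.snoc β m := by
    simpa using Fin.snoc_nsmul (k + 1) β m
  have hshift : Tendsto (fun k : ℕ => f (k + 1) / (k + 1)) atTop
      (𝓝 (c fun i => (β i : ℝ) / m)) := by
    have hlim := hc _ hα (fun k => (k + 1) * m) (fun k => (k + 1) • β)
      (fun k => by positivity)
      (tendsto_id.atTop_mul_const' hm |>.comp (tendsto_add_atTop_nat 1))
      (fun k => hsnoc k ▸ succ_nsmul_mem_of_add_mem hadd hmem k)
      (tendsto_const_nhds.congr fun k => by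
        ext i; simp [mul_div_mul_left _ _ (k.cast_add_one_ne_zero : (k : ℝ) + 1 ≠ 0)])
    refine hlim.congr fun k => ?_
    rw [hsnoc]
    push_cast
    simp only [f, div_div, mul_comm]
  have hL : Tendsto (fun n => f n / n) atTop (𝓝 (c fun i => (β i : ℝ) / m)) :=
    (tendsto_add_atTop_iff_nat 1).1 (by exact_mod_cast hshift)
  refine ⟨hseq ▸ eq_iInf_of_tendsto_div hf hL, hseq ▸ hshift, ?_⟩
  simpa [f] using le_div_of_tendsto_div hf hL one_pos

/-- For `(β, m) ∈ Γ` with `m ≥ 1` and `α = β/m` in the interior of `Δ(Γ)`, the Chebyshev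
transform satisfies `c(α) = inf_{k ≥ 1} F(k·(β,m))/(km)`, the sequence
`k ↦ F(k·(β,m))/(km)` converges to `c(α)`, and in particular `c(α) ≤ F((β,m))/m`. -/
theorem chebyshev_inf (d : ℕ) (hd : 1 ≤ d) (Γ : Set (Fin (d+1) → ℕ))
    (h0 : (0 : Fin (d+1) → ℕ) ∈ Γ)
    (hadd : ∀ x ∈ Γ, ∀ y ∈ Γ, x + y ∈ Γ)
    (hgen : AddSubgroup.closure
        ((fun γ : Fin (d+1) → ℕ => (fun i => (γ i : ℤ))) '' Γ) = ⊤)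
    (F : (Fin (d+1) → ℕ) → ℝ) (C : ℝ)
    (hsub : ∀ x ∈ Γ, ∀ y ∈ Γ, F (x + y) ≤ F x + F y)
    (hlb : ∀ γ ∈ Γ, C * (∑ i, (γ i : ℝ)) ≤ F γ)
    (c : (Fin d → ℝ) → ℝ)
    (hc : ∀ α ∈ interior (deltaOf Γ),
      ∀ (m : ℕ → ℕ) (β : ℕ → Fin d → ℕ),
        (∀ k, 0 < m k) →
        Tendsto (fun k => m k) atTop atTop →
        (∀ k, Fin.snoc (β k) (m k) ∈ Γ) →
        Tendsto (fun k => (fun i => (β k i : ℝ) / (m k : ℝ))) atTop (nhds α) →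
        Tendsto (fun k => F (Fin.snoc (β k) (m k)) / (m k : ℝ)) atTop (nhds (c α))) :
    ∀ (β : Fin d → ℕ) (m : ℕ), 1 ≤ m → Fin.snoc β m ∈ Γ →
      (fun i => (β i : ℝ) / (m : ℝ)) ∈ interior (deltaOf Γ) →
      (c (fun i => (β i : ℝ) / (m : ℝ)) =
          ⨅ k : ℕ, F ((k + 1) • Fin.snoc β m) / (((k : ℝ) + 1) * (m : ℝ))) ∧
      Tendsto (fun k : ℕ => F ((k + 1) • Fin.snoc β m) / (((k : ℝ) + 1) * (m : ℝ)))
        atTop (nhds (c (fun i => (β i : ℝ) / (m : ℝ)))) ∧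
      c (fun i => (β i : ℝ) / (m : ℝ)) ≤ F (Fin.snoc β m) / (m : ℝ) :=
  chebyshev_inf_general d Γ hadd F hsub c hc
end

section
/- Let K be a field complete with respect to a nontrivial nonarchimedean absolute value |·|, with valuation ring O = {a ∈ K : |a| ≤ 1}. Let V be a finite-dimensional K-vector space of dimension N equipped with a norm ‖·‖ satisfying ‖x + y‖ ≤ max(‖x‖, ‖y‖) and ‖a·x‖ = |a|·‖x‖ for a ∈ K, x, y ∈ V. Let V = W₁ ⊋ W₂ ⊋ ⋯ ⊋ W_N ⊋ W_{N+1} = {0} be a complete flag of subspaces. For each i, suppose e_i ∈ W_i ∖ W_{i+1} satisfies ‖e_i‖ ≤ ‖e_i + w‖ for all w ∈ W_{i+1}, and suppose ‖e_i‖ = |λ_i| for some λ_i ∈ K^×; set e_i° = λ_i^{-1} e_i, so ‖e_i°‖ = 1. Then the unit ball {v ∈ V : ‖v‖ ≤ 1} equals the O-module O·e₁° + O·e₂° + ⋯ + O·e_N°. -/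
/-- Let `K` be a complete field with a nontrivial nonarchimedean absolute value, with
valuation ring `O = {a : ‖a‖ ≤ 1}`, and `V` an `N`-dimensional normed `K`-vector space
whose norm is ultrametric. Given a complete flag `V = W₁ ⊋ ⋯ ⊋ W_N ⊋ W_{N+1} = 0`
(indexed by `Fin (N+1)`, so `W 0 = V`, `W (last N) = 0`, `dim (W i) = N - i`), elements
`e i ∈ W i \ W (i+1)` of minimal norm in their cosets modulo `W (i+1)`, and scalars
`λ i ∈ K^×` with `‖e i‖ = ‖λ i‖` (so `e i° = λ i⁻¹ • e i` has norm 1), the unit ball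
`{v : ‖v‖ ≤ 1}` equals the `O`-module `O·e 0° + ⋯ + O·e (N-1)°`. -/
theorem unit_ball_eq_lattice (N : ℕ) (K : Type*) [NontriviallyNormedField K]
    [CompleteSpace K]
    (hK : ∀ a b : K, ‖a + b‖ ≤ max ‖a‖ ‖b‖)
    (V : Type*) [NormedAddCommGroup V] [NormedSpace K V] [FiniteDimensional K V]
    (hV : ∀ x y : V, ‖x + y‖ ≤ max ‖x‖ ‖y‖)
    (hdim : Module.finrank K V = N)
    (W : Fin (N+1) → Submodule K V)
    (hW0 : W 0 = ⊤) (hWlast : W (Fin.last N) = ⊥)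
    (hmono : ∀ i : Fin N, W i.succ ≤ W i.castSucc)
    (hWrank : ∀ i : Fin (N+1), Module.finrank K (W i) = N - (i : ℕ))
    (e : Fin N → V)
    (he : ∀ i : Fin N, e i ∈ W i.castSucc)
    (he' : ∀ i : Fin N, e i ∉ W i.succ)
    (hmin : ∀ i : Fin N, ∀ w ∈ W i.succ, ‖e i‖ ≤ ‖e i + w‖)
    (lam : Fin N → K) (hlam : ∀ i, lam i ≠ 0) (hnorm : ∀ i, ‖e i‖ = ‖lam i‖) :
    { v : V | ‖v‖ ≤ 1 } =
      { v : V | ∃ c : Fin N → K, (∀ i, ‖c i‖ ≤ 1) ∧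
        v = ∑ i : Fin N, c i • ((lam i)⁻¹ • e i) } := by

  -- abbreviation for the normalized basis vectors
  set f : Fin N → V := fun i => (lam i)⁻¹ • e i with hf
  have hfe : ∀ i, (lam i) • f i = e i := by
    intro i
    rw [hf]
    rw [smul_smul, mul_inv_cancel₀ (hlam i), one_smul]
  have hfnorm : ∀ i, ‖f i‖ = 1 := by
    intro i
    rw [hf, norm_smul, norm_inv, ← hnorm i]
    have : ‖e i‖ ≠ 0 := by
      intro h
      exact he' i (by simpa [norm_eq_zero.mp h] using (W i.succ).zero_mem)
    field_simp
  -- ultrametric bound for finite sums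
  have sum_le : ∀ (s : Finset (Fin N)) (g : Fin N → V), (∀ i, ‖g i‖ ≤ 1) →
      ‖∑ i ∈ s, g i‖ ≤ 1 := by
    intro s g hg
    induction s using Finset.cons_induction with
    | empty => simp
    | cons a s ha ih =>
      rw [Finset.sum_cons]
      exact le_trans (hV _ _) (max_le (hg a) ih)
  -- key decomposition lemma, by downward induction along the flag
  have key : ∀ m : ℕ, ∀ k : Fin (N+1), N ≤ (k : ℕ) + m → ∀ v ∈ W k,
      ∃ c : Fin N → K, (∀ i, ‖c i‖ ≤ ‖v‖) ∧ v = ∑ i : Fin N, c i • f i := by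
    intro m
    induction m with
    | zero =>
      intro k hk v hv
      have hkN : (k : ℕ) = N := le_antisymm (Nat.lt_succ_iff.mp k.isLt) (by simpa using hk)
      have : k = Fin.last N := Fin.ext (by simpa using hkN)
      rw [this, hWlast] at hv
      refine ⟨0, ?_, ?_⟩
      · intro i; simp [norm_nonneg]
      · simpa using (Submodule.mem_bot K).mp hv
    | succ m ih =>
      intro k hk v hv
      by_cases hkN : (k : ℕ) < N
      · set j : Fin N := ⟨k, hkN⟩ with hj
        have hkj : k = j.castSucc := Fin.ext rfl
        have hej : e j ≠ 0 := by
          intro h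
          exact he' j (by simpa [h] using (W j.succ).zero_mem)
        -- W j.castSucc = W j.succ ⊔ span {e j}
        have hsup : W j.castSucc = W j.succ ⊔ Submodule.span K {e j} := by
          have hle : W j.succ ⊔ Submodule.span K {e j} ≤ W j.castSucc := by
            refine sup_le (hmono j) ?_
            rw [Submodule.span_singleton_le_iff_mem]
            exact he j
          have hdisj : Disjoint (W j.succ) (Submodule.span K {e j}) :=
            (Submodule.disjoint_span_singleton' hej).mpr (he' j)
          have hrk : Module.finrank K (W j.succ ⊔ Submodule.span K {e j} : Submodule K V)
              = Module.finrank K (W j.castSucc) := by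
            have h1 := Submodule.finrank_sup_add_finrank_inf_eq (W j.succ)
              (Submodule.span K {e j})
            rw [hdisj.eq_bot] at h1
            have h2 : Module.finrank K (Submodule.span K {e j} : Submodule K V) = 1 :=
              finrank_span_singleton hej
            have h3 := hWrank j.succ
            have h4 := hWrank j.castSucc
            simp only [finrank_bot, add_zero, Fin.val_succ, Fin.coe_castSucc] at h1 h3 h4
            have hjlt : (j : ℕ) < N := j.isLt
            omega
          exact (Submodule.eq_of_le_of_finrank_le hle (le_of_eq hrk.symm)).symm
        rw [hkj, hsup] at hv
        obtain ⟨w, hw, x, hx, hvw⟩ := Submodule.mem_sup.mp hv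
        obtain ⟨a, rfl⟩ := Submodule.mem_span_singleton.mp hx
        -- v = w + a • e j, with ‖a • e j‖ ≤ ‖v‖ and ‖w‖ ≤ ‖v‖
        have hbound : ‖a • e j‖ ≤ ‖v‖ := by
          rcases eq_or_ne a 0 with rfl | ha
          · simpa using norm_nonneg v
          · have h1 : ‖e j‖ ≤ ‖e j + a⁻¹ • w‖ := hmin j _ ((W j.succ).smul_mem _ hw)
            have h2 : ‖a • (e j + a⁻¹ • w)‖ = ‖v‖ := by
              rw [smul_add, smul_smul, mul_inv_cancel₀ ha, one_smul, ← hvw, add_comm]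
            calc ‖a • e j‖ = ‖a‖ * ‖e j‖ := norm_smul a (e j)
              _ ≤ ‖a‖ * ‖e j + a⁻¹ • w‖ := by
                  exact mul_le_mul_of_nonneg_left h1 (norm_nonneg a)
              _ = ‖v‖ := by rw [← norm_smul]; exact h2
        have hwle : ‖w‖ ≤ ‖v‖ := by
          have : w = v + (-(a • e j)) := by rw [← hvw]; abel
          rw [this]
          exact le_trans (hV _ _) (max_le le_rfl (by simpa using hbound))
        -- apply the inductive hypothesis to w ∈ W j.succ
        have hksucc : N ≤ ((j.succ : Fin (N+1)) : ℕ) + m := by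
          simp only [Fin.val_succ]
          have : (j : ℕ) = (k : ℕ) := rfl
          omega
        obtain ⟨c, hc, hcw⟩ := ih j.succ hksucc w hw
        refine ⟨fun i => c i + (if i = j then a * lam j else 0), ?_, ?_⟩
        · intro i
          by_cases hij : i = j
          · subst hij
            simp only [if_pos rfl, if_true]
            refine le_trans (hK _ _) (max_le (le_trans (hc j) hwle) ?_)
            rw [norm_mul, ← hnorm j, ← norm_smul]
            exact hbound
          · simp only [if_neg hij, add_zero]
            exact le_trans (hc i) hwle
        · have : ∑ i : Fin N, (c i + (if i = j then a * lam j else 0)) • f i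
              = (∑ i : Fin N, c i • f i) + ∑ i : Fin N, (if i = j then a * lam j else 0) • f i := by
            rw [← Finset.sum_add_distrib]
            exact Finset.sum_congr rfl (fun i _ => by rw [add_smul])
          rw [this, ← hcw]
          have hsingle : ∑ i : Fin N, (if i = j then a * lam j else 0) • f i = a • e j := by
            rw [Finset.sum_eq_single j]
            · rw [if_pos rfl, mul_smul, hfe]
            · intro b _ hb; rw [if_neg hb, zero_smul]
            · intro h; exact absurd (Finset.mem_univ j) h
          rw [hsingle, ← hvw]
      · -- k = last N: same as base case
        have hkN' : (k : ℕ) = N := le_antisymm (Nat.lt_succ_iff.mp k.isLt) (le_of_not_gt hkN)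
        have : k = Fin.last N := Fin.ext (by simpa using hkN')
        rw [this, hWlast] at hv
        refine ⟨0, ?_, ?_⟩
        · intro i; simp [norm_nonneg]
        · simpa using (Submodule.mem_bot K).mp hv
  -- conclude
  ext v
  simp only [Set.mem_setOf_eq]
  constructor
  · intro hvle
    obtain ⟨c, hc, hcv⟩ := key N 0 (by simp) v (by rw [hW0]; trivial)
    exact ⟨c, fun i => le_trans (hc i) hvle, hcv⟩
  · rintro ⟨c, hc, rfl⟩
    refine sum_le Finset.univ _ (fun i => ?_)
    rw [norm_smul]
    calc ‖c i‖ * ‖f i‖ = ‖c i‖ := by rw [hfnorm i, mul_one]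
      _ ≤ 1 := hc i
end

section
/- Let d ≥ 1 and let A, B ⊂ ℝ^d be compact convex sets with nonempty interior. Let f : A → ℝ, g : B → ℝ, and h : A + B → ℝ be continuous convex functions with f ≤ 0, g ≤ 0, h ≤ 0, and suppose h(x + y) ≤ f(x) + g(y) for all x ∈ A and y ∈ B, where A + B denotes the Minkowski sum. Then (∫_{A+B} (−h) dx)^{1/(d+1)} ≥ (∫_A (−f) dx)^{1/(d+1)} + (∫_B (−g) dx)^{1/(d+1)}. -/
/-!
The region under the graph of `-f` over `A` is a closed subset of `ℝ^d × ℝ` of volume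
`∫_A -f`, and `h (x + y) ≤ f x + g y` says exactly that the regions of `f` and `g` add up into
the region of `h`; so the claim is the Brunn–Minkowski inequality in dimension `d + 1`.

Brunn–Minkowski follows from the Prékopa–Leindler inequality applied to indicator functions of
rescaled copies of the two sets. Prékopa–Leindler tensorizes by Fubini, so it suffices to prove
it on `ℝ`. There, after normalizing `sup f = sup g = 1`, the superlevel sets satisfy
`(1 - t) • {f > s} + t • {g > s} ⊆ {h > s}`; the one-dimensional Brunn–Minkowski inequality
`|S| + |T| ≤ |S + T|` and the layer-cake formula give `(1 - t) ∫ f + t ∫ g ≤ ∫ h`, and the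
weighted AM–GM inequality finishes.
-/

open MeasureTheory Set Pointwise
open scoped ENNReal

theorem ENNReal.rpow_mul_rpow_le_add {t : ℝ} (ht : t ∈ Ioo 0 1) (x y : ℝ≥0∞) :
    x ^ (1 - t) * y ^ t ≤ ENNReal.ofReal (1 - t) * x + ENNReal.ofReal t * y := by
  have h₁ : 0 < 1 - t := sub_pos.2 ht.2
  have := ENNReal.young_inequality (x ^ (1 - t)) (y ^ t)
    (Real.HolderConjugate.one_sub_inv_inv ht.1 ht.2)
  rwa [ENNReal.rpow_rpow_inv h₁.ne', ENNReal.rpow_rpow_inv ht.1.ne', ENNReal.ofReal_inv_of_pos h₁,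
    ENNReal.ofReal_inv_of_pos ht.1, div_eq_mul_inv, div_eq_mul_inv, inv_inv, inv_inv,
    mul_comm x, mul_comm y] at this

theorem ENNReal.min_le_rpow_mul_rpow {t : ℝ} (ht : t ∈ Ioo 0 1) (x y : ℝ≥0∞) :
    min x y ≤ x ^ (1 - t) * y ^ t := by
  calc min x y = min x y ^ (1 - t) * min x y ^ t := by
        rw [← ENNReal.rpow_add_of_nonneg _ _ (sub_nonneg.2 ht.2.le) ht.1.le, sub_add_cancel,
          ENNReal.rpow_one]
    _ ≤ x ^ (1 - t) * y ^ t := by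
        gcongr
        exacts [sub_nonneg.2 ht.2.le, min_le_left _ _, ht.1.le, min_le_right _ _]

theorem ENNReal.iSup_rpow_mul_iSup_rpow_le {u v : ℕ → ℝ≥0∞} (hu : Monotone u) (hv : Monotone v)
    {p q : ℝ} (hp : 0 < p) (hq : 0 < q) {c : ℝ≥0∞} (huv : ∀ n, u n ^ p * v n ^ q ≤ c) :
    (⨆ n, u n) ^ p * (⨆ n, v n) ^ q ≤ c := by
  have hu' := (ENNReal.orderIsoRpow p hp).map_iSup u
  have hv' := (ENNReal.orderIsoRpow q hq).map_iSup v
  simp only [ENNReal.orderIsoRpow_apply] at hu' hv'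
  rw [hu', hv', ENNReal.iSup_mul]
  refine iSup_le fun m => ?_
  rw [ENNReal.mul_iSup]
  exact iSup_le fun n => (huv (max m n)).trans' (mul_le_mul'
    (ENNReal.rpow_le_rpow (hu (le_max_left m n)) hp.le)
    (ENNReal.rpow_le_rpow (hv (le_max_right m n)) hq.le))

theorem Real.volume_restrict_Ioi_setOf_ofReal_lt (a : ℝ≥0∞) :
    volume.restrict (Ioi 0) {t : ℝ | ENNReal.ofReal t < a} = a := by
  rw [Measure.restrict_apply (measurableSet_lt ENNReal.measurable_ofReal measurable_const)]
  rcases eq_or_ne a ⊤ with rfl | ha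
  · simp
  · have : {t : ℝ | ENNReal.ofReal t < a} ∩ Ioi 0 = Ioo 0 a.toReal := by
      ext t
      simp +contextual [ENNReal.ofReal_lt_iff_lt_toReal, ha, le_of_lt, and_comm]
    rw [this, Real.volume_Ioo, sub_zero, ENNReal.ofReal_toReal ha]

theorem lintegral_eq_lintegral_meas_ofReal_lt {α : Type*} [MeasurableSpace α] (μ : Measure α)
    [SFinite μ] {f : α → ℝ≥0∞} (hf : Measurable f) :
    ∫⁻ x, f x ∂μ = ∫⁻ t in Ioi 0, μ {x | ENNReal.ofReal t < f x} := by
  have hU : MeasurableSet {p : α × ℝ | ENNReal.ofReal p.2 < f p.1} :=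
    measurableSet_lt (ENNReal.measurable_ofReal.comp measurable_snd) (hf.comp measurable_fst)
  have := Measure.prod_apply (μ := μ) (ν := volume.restrict (Ioi (0 : ℝ))) hU
  rw [Measure.prod_apply_symm hU] at this
  simp only [preimage_ofPred_eq, Real.volume_restrict_Ioi_setOf_ofReal_lt] at this
  exact this.symm

theorem Real.volume_add_volume_le_volume_add_of_isCompact {K L : Set ℝ} (hK : IsCompact K)
    (hL : IsCompact L) (hK₀ : K.Nonempty) (hL₀ : L.Nonempty) :
    volume K + volume L ≤ volume (K + L) := by
  obtain ⟨a, haK, ha⟩ := hK.exists_isGreatest hK₀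
  obtain ⟨b, hbL, hb⟩ := hL.exists_isLeast hL₀
  have hinter : (b +ᵥ K) ∩ (a +ᵥ L) ⊆ {a + b} := by
    rintro _ ⟨⟨x, hx, rfl⟩, ⟨y, hy, hxy⟩⟩
    have := ha hx
    have := hb hy
    simp only [vadd_eq_add] at hxy ⊢
    rw [mem_singleton_iff]
    linarith
  calc volume K + volume L = volume (b +ᵥ K) + volume (a +ᵥ L) := by
        rw [measure_vadd, measure_vadd]
    _ = volume ((b +ᵥ K) ∪ (a +ᵥ L)) + volume ((b +ᵥ K) ∩ (a +ᵥ L)) :=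
        (measure_union_add_inter _ (hL.measurableSet.const_vadd a)).symm
    _ ≤ volume (K + L) + volume ({a + b} : Set ℝ) := by
        gcongr
        exact union_subset (add_comm K L ▸ vadd_set_subset_add hbL) (vadd_set_subset_add haK)
    _ = volume (K + L) := by rw [measure_singleton, add_zero]

theorem Real.volume_add_volume_le_volume_add {S T : Set ℝ} (hS : MeasurableSet S)
    (hT : MeasurableSet T) (hS₀ : S.Nonempty) (hT₀ : T.Nonempty) :
    volume S + volume T ≤ volume (S + T) := by
  obtain ⟨s, hs⟩ := hS₀
  obtain ⟨t, ht⟩ := hT₀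
  rw [hS.measure_eq_iSup_isCompact, hT.measure_eq_iSup_isCompact]
  simp only [iSup_and', iSup_subtype']
  have (U : Set ℝ) : Nonempty {K // K ⊆ U ∧ IsCompact K} := ⟨⟨∅, empty_subset U, isCompact_empty⟩⟩
  refine ENNReal.iSup_add_iSup_le fun ⟨K, hKS, hK⟩ ⟨L, hLT, hL⟩ => ?_
  calc volume K + volume L ≤ volume (insert s K) + volume (insert t L) := by
        gcongr <;> exact subset_insert _ _
    _ ≤ volume (insert s K + insert t L) :=
        volume_add_volume_le_volume_add_of_isCompact (hK.insert s) (hL.insert t)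
          (insert_nonempty _ _) (insert_nonempty _ _)
    _ ≤ volume (S + T) :=
        measure_mono (add_subset_add (insert_subset hs hKS) (insert_subset ht hLT))

theorem Real.lintegral_add_lintegral_le_of_iSup_eq_one {t : ℝ} (ht : t ∈ Ioo 0 1)
    {f g h : ℝ → ℝ≥0∞} (hf : Measurable f) (hg : Measurable g) (hh : Measurable h)
    (hf₁ : ⨆ x, f x = 1) (hg₁ : ⨆ x, g x = 1)
    (hfgh : ∀ x y, min (f x) (g y) ≤ h ((1 - t) • x + t • y)) :
    ENNReal.ofReal (1 - t) * (∫⁻ x, f x) + ENNReal.ofReal t * ∫⁻ x, g x ≤ ∫⁻ x, h x := by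
  rw [lintegral_eq_lintegral_meas_ofReal_lt _ hf, lintegral_eq_lintegral_meas_ofReal_lt _ hg,
    lintegral_eq_lintegral_meas_ofReal_lt _ hh, ← lintegral_const_mul' _ _ ENNReal.ofReal_ne_top,
    ← lintegral_const_mul' _ _ ENNReal.ofReal_ne_top]
  refine (le_lintegral_add _ _).trans (setLIntegral_mono' measurableSet_Ioi fun s _ => ?_)
  set F := {x | ENNReal.ofReal s < f x}
  set G := {x | ENNReal.ofReal s < g x}
  by_cases hs : ENNReal.ofReal s < 1
  · obtain ⟨x₀, hx₀⟩ := lt_iSup_iff.1 (hf₁ ▸ hs : ENNReal.ofReal s < ⨆ x, f x)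
    obtain ⟨y₀, hy₀⟩ := lt_iSup_iff.1 (hg₁ ▸ hs : ENNReal.ofReal s < ⨆ y, g y)
    have hFG : (1 - t) • F + t • G ⊆ {x | ENNReal.ofReal s < h x} := by
      rintro _ ⟨_, ⟨x, hx, rfl⟩, _, ⟨y, hy, rfl⟩, rfl⟩
      exact (lt_min hx hy).trans_le (hfgh x y)
    calc ENNReal.ofReal (1 - t) * volume F + ENNReal.ofReal t * volume G
        = volume ((1 - t) • F) + volume (t • G) := by
          simp only [Measure.addHaar_smul_of_nonneg volume (sub_nonneg.2 ht.2.le),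
            Measure.addHaar_smul_of_nonneg volume ht.1.le, Module.finrank_self, pow_one]
      _ ≤ volume ((1 - t) • F + t • G) :=
          volume_add_volume_le_volume_add
            ((measurableSet_lt measurable_const hf).const_smul_of_ne_zero (sub_ne_zero.2 ht.2.ne'))
            ((measurableSet_lt measurable_const hg).const_smul_of_ne_zero ht.1.ne')
            ⟨_, smul_mem_smul_set hx₀⟩ ⟨_, smul_mem_smul_set hy₀⟩
      _ ≤ volume {x | ENNReal.ofReal s < h x} := measure_mono hFG
  · have hF : F = ∅ := eq_empty_of_forall_notMem fun x hx =>
      hs (hx.trans_le (hf₁ ▸ le_iSup f x))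
    have hG : G = ∅ := eq_empty_of_forall_notMem fun x hx =>
      hs (hx.trans_le (hg₁ ▸ le_iSup g x))
    simp [hF, hG]

theorem Real.lintegral_rpow_mul_lintegral_rpow_le_of_iSup_ne_top {t : ℝ} (ht : t ∈ Ioo 0 1)
    {f g h : ℝ → ℝ≥0∞} (hf : Measurable f) (hg : Measurable g) (hh : Measurable h)
    (hf_top : ⨆ x, f x ≠ ⊤) (hg_top : ⨆ x, g x ≠ ⊤)
    (hfgh : ∀ x y, f x ^ (1 - t) * g y ^ t ≤ h ((1 - t) • x + t • y)) :
    (∫⁻ x, f x) ^ (1 - t) * (∫⁻ x, g x) ^ t ≤ ∫⁻ x, h x := by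
  have h₁ : 0 < 1 - t := sub_pos.2 ht.2
  set a := ⨆ x, f x
  set b := ⨆ x, g x
  rcases eq_or_ne a 0 with ha | ha
  · simp [ENNReal.iSup_eq_zero.1 ha, ENNReal.zero_rpow_of_pos h₁]
  rcases eq_or_ne b 0 with hb | hb
  · simp [ENNReal.iSup_eq_zero.1 hb, ENNReal.zero_rpow_of_pos ht.1]
  set c := a ^ (1 - t) * b ^ t
  have hc : c ≠ 0 := mul_ne_zero (ENNReal.rpow_pos (pos_iff_ne_zero.2 ha) hf_top).ne'
    (ENNReal.rpow_pos (pos_iff_ne_zero.2 hb) hg_top).ne'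
  have hc_top : c ≠ ⊤ := ENNReal.mul_ne_top (ENNReal.rpow_ne_top_of_nonneg h₁.le hf_top)
    (ENNReal.rpow_ne_top_of_nonneg ht.1.le hg_top)
  have hscale (u v : ℝ≥0∞) :
      (a⁻¹ * u) ^ (1 - t) * (b⁻¹ * v) ^ t = c⁻¹ * (u ^ (1 - t) * v ^ t) := by
    rw [ENNReal.mul_rpow_of_nonneg _ _ h₁.le, ENNReal.mul_rpow_of_nonneg _ _ ht.1.le,
      ENNReal.inv_rpow, ENNReal.inv_rpow,
      ENNReal.mul_inv (Or.inr (ENNReal.rpow_ne_top_of_nonneg ht.1.le hg_top))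
        (Or.inl (ENNReal.rpow_ne_top_of_nonneg h₁.le hf_top))]
    ring
  have hnorm := Real.lintegral_add_lintegral_le_of_iSup_eq_one ht (hf.const_mul a⁻¹)
    (hg.const_mul b⁻¹) (hh.const_mul c⁻¹)
    (by rw [← ENNReal.mul_iSup, ENNReal.inv_mul_cancel ha hf_top])
    (by rw [← ENNReal.mul_iSup, ENNReal.inv_mul_cancel hb hg_top])
    fun x y => (ENNReal.min_le_rpow_mul_rpow ht _ _).trans
      ((hscale _ _).trans_le (mul_le_mul_right (hfgh x y) _))
  rw [lintegral_const_mul _ hf, lintegral_const_mul _ hg, lintegral_const_mul _ hh] at hnorm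
  have := (ENNReal.rpow_mul_rpow_le_add ht _ _).trans hnorm
  rwa [hscale, ENNReal.mul_le_mul_iff_right (ENNReal.inv_ne_zero.2 hc_top)
    (ENNReal.inv_ne_top.2 hc)] at this

section PrekopaLeindler

variable {E : Type*} [AddCommGroup E] [Module ℝ E] [MeasurableSpace E]

def PrekopaLeindler (μ : Measure E) : Prop :=
  ∀ ⦃t : ℝ⦄, t ∈ Ioo 0 1 → ∀ ⦃f g h : E → ℝ≥0∞⦄, Measurable f → Measurable g → Measurable h →
    (∀ x y, f x ^ (1 - t) * g y ^ t ≤ h ((1 - t) • x + t • y)) →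
    (∫⁻ x, f x ∂μ) ^ (1 - t) * (∫⁻ x, g x ∂μ) ^ t ≤ ∫⁻ x, h x ∂μ

theorem PrekopaLeindler.of_iSup_ne_top {μ : Measure E}
    (H : ∀ ⦃t : ℝ⦄, t ∈ Ioo 0 1 → ∀ ⦃f g h : E → ℝ≥0∞⦄, Measurable f → Measurable g →
      Measurable h → ⨆ x, f x ≠ ⊤ → ⨆ x, g x ≠ ⊤ →
      (∀ x y, f x ^ (1 - t) * g y ^ t ≤ h ((1 - t) • x + t • y)) →
      (∫⁻ x, f x ∂μ) ^ (1 - t) * (∫⁻ x, g x ∂μ) ^ t ≤ ∫⁻ x, h x ∂μ) :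
    PrekopaLeindler μ := by
  intro t ht f g h hf hg hh hfgh
  have htrunc {φ : E → ℝ≥0∞} (hφ : Measurable φ) :
      ∫⁻ x, φ x ∂μ = ⨆ n : ℕ, ∫⁻ x, min (φ x) n ∂μ := by
    rw [← lintegral_iSup (fun n => hφ.min measurable_const)
      fun m n hmn x => min_le_min_left _ (Nat.cast_le.2 hmn)]
    simp_rw [← inf_iSup_eq, ENNReal.iSup_natCast, inf_top_eq]
  rw [htrunc hf, htrunc hg]
  have hmono {φ : E → ℝ≥0∞} : Monotone fun n : ℕ => ∫⁻ x, min (φ x) n ∂μ :=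
    fun m n hmn => lintegral_mono fun x => min_le_min_left _ (Nat.cast_le.2 hmn)
  refine ENNReal.iSup_rpow_mul_iSup_rpow_le hmono hmono (sub_pos.2 ht.2) ht.1 fun n => ?_
  have hmin {φ : E → ℝ≥0∞} : ⨆ x, min (φ x) n ≠ ⊤ :=
    ne_top_of_le_ne_top (ENNReal.natCast_ne_top n) (iSup_le fun x => min_le_right _ _)
  refine H ht (hf.min measurable_const) (hg.min measurable_const) hh hmin hmin
    fun x y => (hfgh x y).trans' (mul_le_mul'
      (ENNReal.rpow_le_rpow (min_le_left _ _) (sub_nonneg.2 ht.2.le))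
      (ENNReal.rpow_le_rpow (min_le_left _ _) ht.1.le))

theorem Real.prekopaLeindler_volume : PrekopaLeindler (volume : Measure ℝ) :=
  PrekopaLeindler.of_iSup_ne_top fun _ ht _ _ _ hf hg hh hf_top hg_top hfgh =>
    Real.lintegral_rpow_mul_lintegral_rpow_le_of_iSup_ne_top ht hf hg hh hf_top hg_top hfgh

theorem PrekopaLeindler.prod {F : Type*} [AddCommGroup F] [Module ℝ F] [MeasurableSpace F]
    {μ : Measure E} {ν : Measure F} [SFinite μ] [SFinite ν] (hμ : PrekopaLeindler μ)
    (hν : PrekopaLeindler ν) : PrekopaLeindler (μ.prod ν) := by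
  intro t ht f g h hf hg hh hfgh
  rw [lintegral_prod _ hf.aemeasurable, lintegral_prod _ hg.aemeasurable,
    lintegral_prod _ hh.aemeasurable]
  exact hμ ht hf.lintegral_prod_right' hg.lintegral_prod_right' hh.lintegral_prod_right'
    fun x x' => hν ht (hf.comp measurable_prodMk_left) (hg.comp measurable_prodMk_left)
      (hh.comp measurable_prodMk_left) fun y y' => hfgh (x, y) (x', y')

theorem PrekopaLeindler.of_measurePreserving {F : Type*} [AddCommGroup F] [Module ℝ F]
    [MeasurableSpace F] {μ : Measure E} {ν : Measure F} (hμ : PrekopaLeindler μ)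
    (e : E →ₗ[ℝ] F) (he : MeasurePreserving e μ ν) : PrekopaLeindler ν := by
  intro t ht f g h hf hg hh hfgh
  rw [← he.lintegral_comp hf, ← he.lintegral_comp hg, ← he.lintegral_comp hh]
  exact hμ ht (hf.comp he.measurable) (hg.comp he.measurable) (hh.comp he.measurable)
    fun x y => by simpa using hfgh (e x) (e y)

theorem PrekopaLeindler.of_subsingleton [Subsingleton E] (μ : Measure E) :
    PrekopaLeindler μ := by
  intro t ht f g h _ _ _ hfgh
  have h₁ : 0 ≤ 1 - t := sub_nonneg.2 ht.2.le
  have hconst (φ : E → ℝ≥0∞) : ∫⁻ x, φ x ∂μ = φ 0 * μ univ := by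
    rw [← lintegral_const]
    exact lintegral_congr fun x => by rw [Subsingleton.elim x 0]
  rw [hconst f, hconst g, hconst h, ENNReal.mul_rpow_of_nonneg _ _ h₁,
    ENNReal.mul_rpow_of_nonneg _ _ ht.1.le]
  calc f 0 ^ (1 - t) * μ univ ^ (1 - t) * (g 0 ^ t * μ univ ^ t)
      = f 0 ^ (1 - t) * g 0 ^ t * μ univ ^ (1 - t + t) := by
        rw [ENNReal.rpow_add_of_nonneg _ _ h₁ ht.1.le]; ring
    _ ≤ h 0 * μ univ := by
        rw [sub_add_cancel, ENNReal.rpow_one]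
        gcongr
        simpa only [Subsingleton.elim ((1 - t) • (0 : E) + t • 0) 0] using hfgh 0 0

theorem PrekopaLeindler.measure_rpow_mul_measure_rpow_le {μ : Measure E} (hμ : PrekopaLeindler μ)
    {t : ℝ} (ht : t ∈ Ioo 0 1) {X Y Z : Set E} (hX : MeasurableSet X) (hY : MeasurableSet Y)
    (hXYZ : (1 - t) • X + t • Y ⊆ Z) :
    μ X ^ (1 - t) * μ Y ^ t ≤ μ Z := by
  have hZ := measurableSet_toMeasurable μ Z
  rw [← measure_toMeasurable Z, ← lintegral_indicator_one hX, ← lintegral_indicator_one hY,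
    ← lintegral_indicator_one hZ]
  refine hμ ht (measurable_one.indicator hX) (measurable_one.indicator hY)
    (measurable_one.indicator hZ) fun x y => ?_
  by_cases hx : x ∈ X
  · by_cases hy : y ∈ Y
    · have := subset_toMeasurable μ Z
        (hXYZ (add_mem_add (smul_mem_smul_set hx) (smul_mem_smul_set hy)))
      simp [hx, hy, this]
    · simp [hy, ENNReal.zero_rpow_of_pos ht.1]
  · simp [hx, ENNReal.zero_rpow_of_pos (sub_pos.2 ht.2)]

end PrekopaLeindler

theorem prekopaLeindler_volume_pi : ∀ n : ℕ, PrekopaLeindler (volume : Measure (Fin n → ℝ))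
  | 0 => PrekopaLeindler.of_subsingleton _
  | n + 1 => by
    refine (Real.prekopaLeindler_volume.prod (prekopaLeindler_volume_pi n)).of_measurePreserving
      (Fin.consLinearEquiv ℝ fun _ => ℝ).toLinearMap ?_
    rw [← Measure.volume_eq_prod]
    convert (volume_preserving_piFinSuccAbove (fun _ : Fin (n + 1) => ℝ) 0).symm using 1
    · rfl
    · ext p : 1
      exact (Fin.insertNth_zero' _ _).symm

theorem measure_le_measure_add {G : Type*} [AddCommGroup G] [MeasurableSpace G] [MeasurableAdd G]
    (μ : Measure G) [μ.IsAddLeftInvariant] (X : Set G) {Y : Set G} (hY : Y.Nonempty) :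
    μ X ≤ μ (X + Y) := by
  obtain ⟨y, hy⟩ := hY
  rw [← measure_vadd μ y X]
  exact measure_mono (add_comm Y X ▸ vadd_set_subset_add hy)

section BrunnMinkowski

variable {E : Type*} [NormedAddCommGroup E] [NormedSpace ℝ E] [MeasurableSpace E] [BorelSpace E]
  [FiniteDimensional ℝ E] {μ : Measure E} [μ.IsAddHaarMeasure] {X Y : Set E}

theorem PrekopaLeindler.ofReal_add_pow_finrank_le (hμ : PrekopaLeindler μ)
    (hX : MeasurableSet X) (hY : MeasurableSet Y) {x y : ℝ} (hx : 0 < x) (hy : 0 < y)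
    (hμX : μ X = ENNReal.ofReal (x ^ Module.finrank ℝ E))
    (hμY : μ Y = ENNReal.ofReal (y ^ Module.finrank ℝ E)) :
    ENNReal.ofReal ((x + y) ^ Module.finrank ℝ E) ≤ μ (X + Y) := by
  have hxy : 0 < x + y := add_pos hx hy
  have ht : y / (x + y) ∈ Ioo 0 1 := ⟨div_pos hy hxy, (div_lt_one hxy).2 (by linarith)⟩
  have h₁ : 1 - y / (x + y) = x / (x + y) := by field_simp; ring
  -- rescaled to volume `(x + y) ^ n`, `X` and `Y` have `X + Y` as convex combination
  have hscale {z : ℝ} (hz : 0 < z) {S : Set E}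
      (hS : μ S = ENNReal.ofReal (z ^ Module.finrank ℝ E)) :
      μ (((x + y) / z) • S) = ENNReal.ofReal ((x + y) ^ Module.finrank ℝ E) := by
    rw [Measure.addHaar_smul_of_nonneg μ (by positivity), hS, ← ENNReal.ofReal_mul (by positivity),
      ← mul_pow, div_mul_cancel₀ _ hz.ne']
  have hsum :
      (1 - y / (x + y)) • ((x + y) / x) • X + (y / (x + y)) • ((x + y) / y) • Y = X + Y := by
    rw [smul_smul, smul_smul, h₁, div_mul_div_cancel₀ hxy.ne', div_mul_div_cancel₀ hxy.ne',
      div_self hx.ne', div_self hy.ne', one_smul, one_smul]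
  have := hμ.measure_rpow_mul_measure_rpow_le ht (hX.const_smul₀ _) (hY.const_smul₀ _) hsum.subset
  rwa [hscale hx hμX, hscale hy hμY,
    ← ENNReal.rpow_add_of_nonneg _ _ (sub_nonneg.2 ht.2.le) ht.1.le, sub_add_cancel,
    ENNReal.rpow_one] at this

theorem PrekopaLeindler.brunn_minkowski [Nontrivial E] (hμ : PrekopaLeindler μ)
    (hX : MeasurableSet X) (hY : MeasurableSet Y) (hX₀ : X.Nonempty) (hY₀ : Y.Nonempty) :
    μ X ^ (Module.finrank ℝ E : ℝ)⁻¹ + μ Y ^ (Module.finrank ℝ E : ℝ)⁻¹ ≤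
      μ (X + Y) ^ (Module.finrank ℝ E : ℝ)⁻¹ := by
  set n := Module.finrank ℝ E
  have hn : n ≠ 0 := Module.finrank_pos.ne'
  have hp : 0 < (n : ℝ)⁻¹ := by positivity
  have hX_le := measure_le_measure_add μ X hY₀
  have hY_le : μ Y ≤ μ (X + Y) := add_comm Y X ▸ measure_le_measure_add μ Y hX₀
  rcases eq_or_ne (μ X) 0 with hX0 | hX0
  · rw [hX0, ENNReal.zero_rpow_of_pos hp, zero_add]
    gcongr
  rcases eq_or_ne (μ Y) 0 with hY0 | hY0
  · rw [hY0, ENNReal.zero_rpow_of_pos hp, add_zero]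
    gcongr
  rcases eq_or_ne (μ X) ⊤ with hX_top | hX_top
  · rw [top_unique (hX_top ▸ hX_le : ⊤ ≤ μ (X + Y)), ENNReal.top_rpow_of_pos hp]
    exact le_top
  rcases eq_or_ne (μ Y) ⊤ with hY_top | hY_top
  · rw [top_unique (hY_top ▸ hY_le : ⊤ ≤ μ (X + Y)), ENNReal.top_rpow_of_pos hp]
    exact le_top
  have hroot {S : Set E} (hS : μ S ≠ ⊤) :
      μ S = ENNReal.ofReal (((μ S).toReal ^ (n : ℝ)⁻¹) ^ n) := by
    rw [Real.rpow_inv_natCast_pow ENNReal.toReal_nonneg hn, ENNReal.ofReal_toReal hS]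
  have hpos {S : Set E} (h0 : μ S ≠ 0) (hS : μ S ≠ ⊤) : 0 < (μ S).toReal ^ (n : ℝ)⁻¹ :=
    Real.rpow_pos_of_pos (ENNReal.toReal_pos h0 hS) _
  calc μ X ^ (n : ℝ)⁻¹ + μ Y ^ (n : ℝ)⁻¹
      = ENNReal.ofReal ((μ X).toReal ^ (n : ℝ)⁻¹ + (μ Y).toReal ^ (n : ℝ)⁻¹) := by
        rw [ENNReal.ofReal_add (hpos hX0 hX_top).le (hpos hY0 hY_top).le,
          ← ENNReal.ofReal_rpow_of_nonneg ENNReal.toReal_nonneg hp.le,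
          ← ENNReal.ofReal_rpow_of_nonneg ENNReal.toReal_nonneg hp.le,
          ENNReal.ofReal_toReal hX_top, ENNReal.ofReal_toReal hY_top]
    _ = ENNReal.ofReal (((μ X).toReal ^ (n : ℝ)⁻¹ + (μ Y).toReal ^ (n : ℝ)⁻¹) ^ n) ^ (n : ℝ)⁻¹ := by
        rw [ENNReal.ofReal_rpow_of_nonneg (by positivity) hp.le,
          Real.pow_rpow_inv_natCast (by positivity) hn]
    _ ≤ μ (X + Y) ^ (n : ℝ)⁻¹ := by
        gcongr
        exact hμ.ofReal_add_pow_finrank_le hX hY (hpos hX0 hX_top) (hpos hY0 hY_top)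
          (hroot hX_top) (hroot hY_top)

end BrunnMinkowski

section regionUnder

variable {α : Type*}

def regionUnder (s : Set α) (φ : α → ℝ) : Set (α × ℝ) :=
  {p | p.1 ∈ s ∧ p.2 ∈ Icc 0 (φ p.1)}

theorem regionUnder_add_subset [Add α] {s t : Set α} {φ ψ χ : α → ℝ}
    (h : ∀ x ∈ s, ∀ y ∈ t, φ x + ψ y ≤ χ (x + y)) :
    regionUnder s φ + regionUnder t ψ ⊆ regionUnder (s + t) χ := by
  rintro _ ⟨⟨x, r⟩, ⟨hx, hr₀, hr⟩, ⟨y, r'⟩, ⟨hy, hr₀', hr'⟩, rfl⟩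
  exact ⟨add_mem_add hx hy, add_nonneg hr₀ hr₀', (add_le_add hr hr').trans (h x hx y hy)⟩

theorem isClosed_regionUnder [TopologicalSpace α] {s : Set α} {φ : α → ℝ} (hs : IsClosed s)
    (hφ : ContinuousOn φ s) : IsClosed (regionUnder s φ) := by
  convert (hs.prod (isClosed_Ici (a := 0))).isClosed_le continuousOn_snd
    (hφ.comp continuousOn_fst fun p hp => hp.1) using 1
  ext p
  simp [regionUnder, and_assoc]

theorem prod_volume_regionUnder_eq_integral [MeasurableSpace α] {μ : Measure α} [SFinite μ]
    {s : Set α} {φ : α → ℝ} (hs : MeasurableSet s) (hm : MeasurableSet (regionUnder s φ))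
    (hφ : IntegrableOn φ s μ) (h₀ : ∀ x ∈ s, 0 ≤ φ x) :
    μ.prod volume (regionUnder s φ) = ENNReal.ofReal (∫ x in s, φ x ∂μ) := by
  have hslice (x : α) :
      volume (Prod.mk x ⁻¹' regionUnder s φ) = s.indicator (fun x => ENNReal.ofReal (φ x)) x := by
    by_cases hx : x ∈ s <;> simp [regionUnder, hx, Icc_def]
  rw [Measure.prod_apply hm, lintegral_congr hslice, lintegral_indicator hs,
    ofReal_integral_eq_lintegral_ofReal hφ ((ae_restrict_iff' hs).2 (ae_of_all _ h₀))]

end regionUnder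

theorem Real.rpow_add_rpow_le_of_ofReal {a b c p : ℝ} (ha : 0 ≤ a) (hb : 0 ≤ b) (hc : 0 ≤ c)
    (hp : 0 ≤ p) (h : ENNReal.ofReal a ^ p + ENNReal.ofReal b ^ p ≤ ENNReal.ofReal c ^ p) :
    a ^ p + b ^ p ≤ c ^ p := by
  rwa [ENNReal.ofReal_rpow_of_nonneg ha hp, ENNReal.ofReal_rpow_of_nonneg hb hp,
    ENNReal.ofReal_rpow_of_nonneg hc hp, ← ENNReal.ofReal_add (by positivity) (by positivity),
    ENNReal.ofReal_le_ofReal_iff (by positivity)] at h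

theorem PrekopaLeindler.integral_rpow_add_integral_rpow_le {E : Type*} [NormedAddCommGroup E]
    [NormedSpace ℝ E] [MeasurableSpace E] [BorelSpace E] [FiniteDimensional ℝ E]
    {μ : Measure E} [μ.IsAddHaarMeasure] (hμ : PrekopaLeindler μ) {s t : Set E}
    (hs : IsCompact s) (ht : IsCompact t) (hs₀ : s.Nonempty) (ht₀ : t.Nonempty) {φ ψ χ : E → ℝ}
    (hφ : ContinuousOn φ s) (hψ : ContinuousOn ψ t) (hχ : ContinuousOn χ (s + t))
    (hφ₀ : ∀ x ∈ s, 0 ≤ φ x) (hψ₀ : ∀ y ∈ t, 0 ≤ ψ y)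
    (hφψχ : ∀ x ∈ s, ∀ y ∈ t, φ x + ψ y ≤ χ (x + y)) :
    (∫ x in s, φ x ∂μ) ^ (Module.finrank ℝ E + 1 : ℝ)⁻¹ +
        (∫ y in t, ψ y ∂μ) ^ (Module.finrank ℝ E + 1 : ℝ)⁻¹ ≤
      (∫ z in s + t, χ z ∂μ) ^ (Module.finrank ℝ E + 1 : ℝ)⁻¹ := by
  have hχ₀ : ∀ z ∈ s + t, 0 ≤ χ z := by
    rintro _ ⟨x, hx, y, hy, rfl⟩
    linarith [hφψχ x hx y hy, hφ₀ x hx, hψ₀ y hy]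
  have hvol {u : Set E} {θ : E → ℝ} (hu : IsCompact u) (hθ : ContinuousOn θ u)
      (hθ₀ : ∀ x ∈ u, 0 ≤ θ x) :=
    prod_volume_regionUnder_eq_integral (μ := μ) hu.measurableSet
      (isClosed_regionUnder hu.isClosed hθ).measurableSet (hθ.integrableOn_compact hu) hθ₀
  obtain ⟨x₀, hx₀⟩ := hs₀
  obtain ⟨y₀, hy₀⟩ := ht₀
  have hbm := (hμ.prod Real.prekopaLeindler_volume).brunn_minkowski
    (isClosed_regionUnder hs.isClosed hφ).measurableSet
    (isClosed_regionUnder ht.isClosed hψ).measurableSet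
    ⟨(x₀, 0), hx₀, le_rfl, hφ₀ x₀ hx₀⟩ ⟨(y₀, 0), hy₀, le_rfl, hψ₀ y₀ hy₀⟩
  have hle := hbm.trans (ENNReal.rpow_le_rpow (measure_mono (regionUnder_add_subset hφψχ))
    (by positivity))
  rw [hvol hs hφ hφ₀, hvol ht hψ hψ₀, hvol (hs.add ht) hχ hχ₀, Module.finrank_prod,
    Module.finrank_self, Nat.cast_add, Nat.cast_one] at hle
  exact Real.rpow_add_rpow_le_of_ofReal (setIntegral_nonneg hs.measurableSet hφ₀)
    (setIntegral_nonneg ht.measurableSet hψ₀) (setIntegral_nonneg (hs.add ht).measurableSet hχ₀)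
    (by positivity) hle

theorem brunn_minkowski_graphs_general (d : ℕ) (A B : Set (Fin d → ℝ))
    (hAc : IsCompact A) (hAint : (interior A).Nonempty)
    (hBc : IsCompact B) (hBint : (interior B).Nonempty)
    (f g h : (Fin d → ℝ) → ℝ)
    (hfcont : ContinuousOn f A) (hf0 : ∀ x ∈ A, f x ≤ 0)
    (hgcont : ContinuousOn g B) (hg0 : ∀ x ∈ B, g x ≤ 0)
    (hhcont : ContinuousOn h (A + B))
    (hsum : ∀ x ∈ A, ∀ y ∈ B, h (x + y) ≤ f x + g y) :
    (∫ x in A, (-f x)) ^ ((1 : ℝ) / (d + 1)) + (∫ x in B, (-g x)) ^ ((1 : ℝ) / (d + 1)) ≤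
      (∫ x in A + B, (-h x)) ^ ((1 : ℝ) / (d + 1)) := by
  have := (prekopaLeindler_volume_pi d).integral_rpow_add_integral_rpow_le hAc hBc
    (hAint.mono interior_subset) (hBint.mono interior_subset) hfcont.neg hgcont.neg hhcont.neg
    (fun x hx => neg_nonneg.2 (hf0 x hx)) (fun y hy => neg_nonneg.2 (hg0 y hy))
    fun x hx y hy => by simpa only [Pi.neg_apply, neg_add] using neg_le_neg (hsum x hx y hy)
  simpa only [Module.finrank_fin_fun, one_div, Pi.neg_apply] using this

/-- Brunn–Minkowski-type log-concavity: for compact convex bodies `A, B ⊆ ℝ^d` with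
nonempty interior and nonpositive continuous convex functions `f` on `A`, `g` on `B`,
`h` on `A + B` with `h(x+y) ≤ f(x) + g(y)`, one has
`(∫_{A+B} -h)^{1/(d+1)} ≥ (∫_A -f)^{1/(d+1)} + (∫_B -g)^{1/(d+1)}`. -/
theorem brunn_minkowski_graphs (d : ℕ) (hd : 1 ≤ d) (A B : Set (Fin d → ℝ))
    (hAc : IsCompact A) (hAconv : Convex ℝ A) (hAint : (interior A).Nonempty)
    (hBc : IsCompact B) (hBconv : Convex ℝ B) (hBint : (interior B).Nonempty)
    (f g h : (Fin d → ℝ) → ℝ)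
    (hfconv : ConvexOn ℝ A f) (hfcont : ContinuousOn f A) (hf0 : ∀ x ∈ A, f x ≤ 0)
    (hgconv : ConvexOn ℝ B g) (hgcont : ContinuousOn g B) (hg0 : ∀ x ∈ B, g x ≤ 0)
    (hhconv : ConvexOn ℝ (A + B) h) (hhcont : ContinuousOn h (A + B))
    (hh0 : ∀ x ∈ A + B, h x ≤ 0)
    (hsum : ∀ x ∈ A, ∀ y ∈ B, h (x + y) ≤ f x + g y) :
    (∫ x in A, (-f x)) ^ ((1 : ℝ) / (d + 1)) + (∫ x in B, (-g x)) ^ ((1 : ℝ) / (d + 1)) ≤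
      (∫ x in A + B, (-h x)) ^ ((1 : ℝ) / (d + 1)) :=
  brunn_minkowski_graphs_general d A B hAc hAint hBc hBint f g h hfcont hf0 hgcont hg0 hhcont hsum
end
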